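/- arXiv:2503.18310 — 6 statements merged into one kernel-verified Lean document; each statement's English description precedes it below -/
import Mathlib

section
/- For any real number x and any positive integer M, as N → ∞ one has (1 - x/N)^N = e^{-x}·(∑_{q=0}^{M} F_q(x)·(x/N)^q + O(N^{-M-1})), where F_0(x) = 1 and for q ≥ 1, F_q(x) = ∑_{k=1}^{q} ((-x)^k / k!) · ∑_{j_1+⋯+j_k=q, j_i≥1} ∏_{s=1}^{k} 1/(j_s+1). -/
open Finset Filter Asymptotics

/-- The set of compositions of `q` into `k` positive parts, as tuples. -/
noncomputable def compositions (k q : ℕ) : Finset (Fin k → ℕ) :=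
  (Finset.Nat.antidiagonalTuple k q).filter fun c => ∀ s, 1 ≤ c s

/-- The coefficients `F_q(x)`. -/
noncomputable def Fcoef (x : ℝ) : ℕ → ℝ
  | 0 => 1
  | q + 1 =>
      ∑ k ∈ Finset.Icc 1 (q + 1),
        ((-x) ^ k / (Nat.factorial k : ℝ)) *
          ∑ c ∈ compositions k (q + 1), ∏ s, (1 : ℝ) / (c s + 1)

/-!
With `u = x / N` one has `N log (1 - u) = -x - x W(u) + O(u^{M+1})`, where
`W(u) = ∑_{j ≥ 1} u^j / (j + 1)`, so `(1 - x/N)^N = e^{-x} exp (-x W(u)) (1 + O(u^{M+1}))`.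
The coefficient of `u^q` in `W(u)^k` is the sum over the compositions of `q` into `k` parts, so
`F_q(x)` is the coefficient of `u^q` in `exp (-x W(u)) = ∑_k (-x W(u))^k / k!`. Truncating `W` and
the exponential series at order `M` costs only `O(u^{M+1})`, and what remains is a polynomial in `u`
whose coefficients up to degree `M` are `F_0(x), …, F_M(x)`.
-/

open Polynomial Topology Real
open scoped Nat

lemma compositions_eq_empty_of_lt {k q : ℕ} (h : q < k) : compositions k q = ∅ := by
  refine eq_empty_of_forall_notMem fun c hc => ?_
  simp only [compositions, mem_filter, Nat.mem_antidiagonalTuple] at hc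
  have : k ≤ q :=
    calc k = ∑ _s : Fin k, 1 := by simp
      _ ≤ ∑ s, c s := sum_le_sum fun s _ => hc.2 s
      _ = q := hc.1
  omega

lemma compositions_eq_filter_piFinset {k q M : ℕ} (hq : q ≤ M) :
    compositions k q = {c ∈ Fintype.piFinset fun _ : Fin k => Icc 1 M | ∑ s, c s = q} := by
  ext c
  simp only [compositions, mem_filter, Nat.mem_antidiagonalTuple, Fintype.mem_piFinset, mem_Icc]
  constructor
  · rintro ⟨hsum, hpos⟩
    exact ⟨fun s => ⟨hpos s, (single_le_sum (fun i _ => Nat.zero_le (c i)) (mem_univ s)).trans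
      (hsum ▸ hq)⟩, hsum⟩
  · rintro ⟨hc, hsum⟩
    exact ⟨hsum, fun s => (hc s).1⟩

lemma Fcoef_eq_sum_range (x : ℝ) {q M : ℕ} (hq : q ≤ M) :
    Fcoef x q = ∑ k ∈ range (M + 1),
      (-x) ^ k / k ! * ∑ c ∈ compositions k q, ∏ s, (1 : ℝ) / (c s + 1) := by
  cases q with
  | zero =>
    rw [sum_eq_single 0
      (fun k _ hk => by simp [compositions_eq_empty_of_lt (Nat.pos_of_ne_zero hk)]) (by simp)]
    simp [compositions, Fcoef]
  | succ q =>
    refine sum_subset (fun k hk => by simp at hk ⊢; omega) fun k _ hk => ?_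
    rcases Nat.eq_zero_or_pos k with rfl | hk0
    · simp [compositions]
    · rw [compositions_eq_empty_of_lt (by simp at hk; omega)]
      simp

theorem Polynomial.isBigO_eval_pow_of_coeff_eq_zero {𝕜 : Type*} [NormedField 𝕜] {p : 𝕜[X]}
    {n : ℕ} (h : ∀ i < n, p.coeff i = 0) : (fun u => p.eval u) =O[𝓝 0] (· ^ n) := by
  obtain ⟨r, rfl⟩ := X_pow_dvd_iff.2 h
  have hr : (fun u => r.eval u) =O[𝓝 (0 : 𝕜)] (fun _ => (1 : 𝕜)) :=
    (r.continuous.tendsto 0).isBigO_one 𝕜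
  simpa using (isBigO_refl (· ^ n) (𝓝 (0 : 𝕜))).mul hr

theorem Polynomial.coeff_sum_C_mul_X_pow_pow {R : Type*} [CommSemiring R] (t : Finset ℕ)
    (a : ℕ → R) (k q : ℕ) :
    ((∑ j ∈ t, C (a j) * X ^ j) ^ k).coeff q =
      ∑ c ∈ Fintype.piFinset (fun _ : Fin k => t) with ∑ s, c s = q, ∏ s, a (c s) := by
  have hpow : (∑ j ∈ t, C (a j) * X ^ j) ^ k =
      ∑ c ∈ Fintype.piFinset (fun _ : Fin k => t), C (∏ s, a (c s)) * X ^ (∑ s, c s) := by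
    rw [← Fin.prod_const, prod_univ_sum]
    simp [prod_mul_distrib, prod_pow_eq_pow_sum]
  simp only [hpow, finsetSum_coeff, coeff_C_mul_X_pow, sum_filter, eq_comm]

/-- Truncation at degree `M` of the power series of `-log (1 - u) / u - 1`. -/
noncomputable def truncW (M : ℕ) : ℝ[X] :=
  ∑ j ∈ Icc 1 M, C (1 / ((j : ℝ) + 1)) * X ^ j

lemma coeff_truncW_pow {M q : ℕ} (k : ℕ) (hq : q ≤ M) :
    (truncW M ^ k).coeff q = ∑ c ∈ compositions k q, ∏ s, (1 : ℝ) / (c s + 1) := by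
  rw [truncW, coeff_sum_C_mul_X_pow_pow, compositions_eq_filter_piFinset hq]

lemma truncW_eval_isBigO (M : ℕ) : (fun u => (truncW M).eval u) =O[𝓝 0] (· ^ 1) :=
  isBigO_eval_pow_of_coeff_eq_zero fun i hi => by
    simp [Nat.lt_one_iff.1 hi, truncW, finsetSum_coeff]

lemma expTaylor_truncW_sub_isBigO (x : ℝ) (M : ℕ) :
    (fun u => ∑ k ∈ range (M + 1), (-x * (truncW M).eval u) ^ k / (k ! : ℝ) -
        ∑ q ∈ range (M + 1), Fcoef x q * u ^ q) =O[𝓝 0] (· ^ (M + 1)) := by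
  set D := ∑ k ∈ range (M + 1), C ((-x) ^ k / k !) * truncW M ^ k -
    ∑ q ∈ range (M + 1), C (Fcoef x q) * X ^ q
  have hD : ∀ i < M + 1, D.coeff i = 0 := fun i hi => by
    have hiM : i ≤ M := Nat.lt_succ_iff.1 hi
    simp only [D, coeff_sub, finsetSum_coeff, coeff_C_mul, coeff_truncW_pow _ hiM, coeff_X_pow,
      mul_ite, mul_one, mul_zero, sum_ite_eq, mem_range, hi, if_true]
    rw [← Fcoef_eq_sum_range x hiM, sub_self]
  refine (isBigO_eval_pow_of_coeff_eq_zero hD).congr_left fun u => ?_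
  simp only [D, eval_sub, eval_finsetSum, eval_mul, eval_C, eval_pow, eval_X, mul_pow,
    div_mul_eq_mul_div]

lemma sum_range_pow_succ_div_eq_mul_one_add_truncW (M : ℕ) (u : ℝ) :
    ∑ i ∈ range (M + 1), u ^ (i + 1) / (i + 1) = u * (1 + (truncW M).eval u) := by
  induction M with
  | zero => simp [truncW]
  | succ M ih =>
    rw [sum_range_succ, ih, truncW, truncW, sum_Icc_succ_top (Nat.le_add_left 1 M)]
    simp only [eval_add, eval_mul, eval_C, eval_pow, eval_X]
    push_cast
    ring

lemma log_one_sub_add_sum_range_isBigO (n : ℕ) :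
    (fun u : ℝ => ∑ i ∈ range n, u ^ (i + 1) / (i + 1) + log (1 - u)) =O[𝓝 0] (· ^ (n + 1)) := by
  refine IsBigO.of_bound 2 ?_
  filter_upwards [Metric.ball_mem_nhds (0 : ℝ) one_half_pos] with u hu
  rw [Metric.mem_ball, dist_zero_right, Real.norm_eq_abs] at hu
  rw [Real.norm_eq_abs, norm_pow, Real.norm_eq_abs]
  calc _ ≤ |u| ^ (n + 1) / (1 - |u|) := abs_log_sub_add_sum_range_le (by linarith) n
    _ ≤ 2 * |u| ^ (n + 1) := by
      rw [div_le_iff₀ (by linarith)]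
      nlinarith [pow_nonneg (abs_nonneg u) (n + 1)]

lemma div_mul_log_one_sub_eq (x : ℝ) (M : ℕ) {u : ℝ} (hu : u ≠ 0) :
    x / u * log (1 - u) = -x + -x * (truncW M).eval u +
      x / u * (∑ i ∈ range (M + 1), u ^ (i + 1) / (i + 1) + log (1 - u)) := by
  rw [sum_range_pow_succ_div_eq_mul_one_add_truncW]
  field_simp
  ring

lemma div_mul_log_one_sub_add_sum_range_isBigO (x : ℝ) (n : ℕ) :
    (fun u : ℝ => x / u * (∑ i ∈ range n, u ^ (i + 1) / (i + 1) + log (1 - u)))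
      =O[𝓝[≠] 0] (· ^ n) := by
  have hdiv : (fun u : ℝ => x / u * u ^ (n + 1)) =O[𝓝[≠] 0] (· ^ n) :=
    (isBigO_const_mul_self x _ _).congr' (eventually_mem_nhdsWithin.mono fun u hu => by
      field_simp [show u ≠ 0 from hu]; ring) EventuallyEq.rfl
  exact ((isBigO_refl (fun u : ℝ => x / u) _).mul
    ((log_one_sub_add_sum_range_isBigO n).mono nhdsWithin_le_nhds)).trans hdiv

theorem one_sub_rpow_div_sub_isBigO (x : ℝ) (M : ℕ) :
    (fun u : ℝ => (1 - u) ^ (x / u) - exp (-x) * ∑ q ∈ range (M + 1), Fcoef x q * u ^ q)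
      =O[𝓝[≠] 0] (· ^ (M + 1)) := by
  set S : ℝ → ℝ := fun u => -x * (truncW M).eval u
  set E : ℝ → ℝ := fun u => x / u * (∑ i ∈ range (M + 1), u ^ (i + 1) / (i + 1) + log (1 - u))
  set T : ℝ → ℝ := fun s => ∑ k ∈ range (M + 1), s ^ k / (k ! : ℝ)
  set P : ℝ → ℝ := fun u => ∑ q ∈ range (M + 1), Fcoef x q * u ^ q
  have hS : S =O[𝓝 0] (· ^ 1) := (truncW_eval_isBigO M).const_mul_left (-x)
  have hS0 : Tendsto S (𝓝 0) (𝓝 0) := hS.trans_tendsto ((continuous_pow 1).tendsto' 0 0 (by simp))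
  have hE : E =O[𝓝[≠] 0] (· ^ (M + 1)) := div_mul_log_one_sub_add_sum_range_isBigO x (M + 1)
  have hexpE : (fun u => exp (E u) - 1) =O[𝓝[≠] 0] (· ^ (M + 1)) := by
    have hE0 : Tendsto E (𝓝[≠] 0) (𝓝 0) := hE.trans_tendsto
      (((continuous_pow (M + 1)).tendsto' 0 0 (by simp)).mono_left nhdsWithin_le_nhds)
    have h := (exp_sub_sum_range_isBigO_pow 1).comp_tendsto hE0
    simp only [Function.comp_def, range_one, sum_singleton, pow_zero, Nat.factorial_zero,
      Nat.cast_one, div_one, pow_one] at h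
    exact h.trans hE
  have hlogError : (fun u => exp (S u) * (exp (E u) - 1)) =O[𝓝[≠] 0] (· ^ (M + 1)) := by
    simpa using (((continuous_exp.tendsto 0).comp hS0).isBigO_one ℝ |>.mono
      nhdsWithin_le_nhds).mul hexpE
  have hexpTaylor : (fun u => exp (S u) - T (S u)) =O[𝓝 0] (· ^ (M + 1)) := by
    have hSpow := hS.pow (M + 1)
    simp only [pow_one] at hSpow
    exact ((exp_sub_sum_range_isBigO_pow (M + 1)).comp_tendsto hS0).trans hSpow
  have hpoly : (fun u => T (S u) - P u) =O[𝓝 0] (· ^ (M + 1)) := expTaylor_truncW_sub_isBigO x M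
  have hsplit : ∀ᶠ u in 𝓝[≠] 0, exp (-x) * (exp (S u) * (exp (E u) - 1) +
      ((exp (S u) - T (S u)) + (T (S u) - P u))) = (1 - u) ^ (x / u) - exp (-x) * P u := by
    filter_upwards [eventually_mem_nhdsWithin,
      nhdsWithin_le_nhds (Iio_mem_nhds one_pos)] with u (hu : u ≠ 0) (hu1 : u < 1)
    rw [rpow_def_of_pos (by linarith), mul_comm (log _), div_mul_log_one_sub_eq x M hu, exp_add,
      exp_add]
    ring
  exact ((hlogError.add ((hexpTaylor.add hpoly).mono nhdsWithin_le_nhds)).const_mul_left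
    (exp (-x))).congr' hsplit EventuallyEq.rfl

theorem asymp_expansion_one_sub_div_pow_general (x : ℝ) (M : ℕ) :
    (fun N : ℕ =>
        (1 - x / N) ^ N -
          Real.exp (-x) * ∑ q ∈ Finset.range (M + 1), Fcoef x q * (x / N) ^ q)
      =O[atTop] fun N : ℕ => ((N : ℝ) ^ (M + 1))⁻¹ := by
  rcases eq_or_ne x 0 with rfl | hx
  · simpa [sum_range_succ', Fcoef] using isBigO_zero _ _
  have hu : Tendsto (fun N : ℕ => x / N) atTop (𝓝[≠] 0) :=
    tendsto_nhdsWithin_iff.2 ⟨tendsto_const_div_atTop_nhds_zero_nat x,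
      (eventually_ne_atTop 0).mono fun N hN => div_ne_zero hx (Nat.cast_ne_zero.2 hN)⟩
  have hexp : ∀ᶠ N : ℕ in atTop, (1 - x / N) ^ (x / (x / N)) = (1 - x / N) ^ N :=
    (eventually_ne_atTop 0).mono fun N hN => by
      rw [div_div_cancel₀ hx, rpow_natCast]
  have hpow : (fun N : ℕ => (x / N) ^ (M + 1)) =O[atTop] fun N : ℕ => ((N : ℝ) ^ (M + 1))⁻¹ :=
    (isBigO_const_mul_self (x ^ (M + 1)) _ _).congr_left fun N => by
      rw [div_pow, div_eq_mul_inv]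
  exact (((one_sub_rpow_div_sub_isBigO x M).comp_tendsto hu).congr'
    (hexp.mono fun N hN => by simp only [Function.comp_apply, hN]) EventuallyEq.rfl).trans hpow

theorem asymp_expansion_one_sub_div_pow (x : ℝ) (M : ℕ) (hM : 1 ≤ M) :
    (fun N : ℕ =>
        (1 - x / N) ^ N -
          Real.exp (-x) * ∑ q ∈ Finset.range (M + 1), Fcoef x q * (x / N) ^ q)
      =O[atTop] fun N : ℕ => ((N : ℝ) ^ (M + 1))⁻¹ :=
  asymp_expansion_one_sub_div_pow_general x M
end

section
/- The integral ∫_0^1 √(1 - x²) · log x dx equals -(π/8)·(2·log 2 + 1). -/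
open Real MeasureTheory Set Filter Topology intervalIntegral

lemma my_integrableOn_log : IntegrableOn Real.log (Set.Ioc 0 (π/2)) := by
  have hle : (1:ℝ) ≤ π/2 := by nlinarith [Real.pi_gt_three]
  have h1 : IntegrableOn Real.log (Set.Ioc 0 1) := by
    have h := intervalIntegral.integrableOn_deriv_of_nonneg
      (g := fun x => x - x * Real.log x) (g' := fun x => -Real.log x) (a := (0:ℝ)) (b := 1)
      ((continuous_id.sub Real.continuous_mul_log).continuousOn)
      (fun x hx => by
        have := (hasDerivAt_id x).sub (Real.hasDerivAt_mul_log hx.1.ne')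
        exact this.congr_deriv (by beta_reduce; ring))
      (fun x hx => by
        have : Real.log x ≤ 0 := Real.log_nonpos hx.1.le hx.2.le
        show (0:ℝ) ≤ -Real.log x
        linarith)
    have h2 := h.neg
    have : (-fun x => -Real.log x) = Real.log := by funext x; simp
    rwa [this] at h2
  have h2 : IntegrableOn Real.log (Set.Icc 1 (π/2)) :=
    (Real.continuousOn_log.mono (by intro x hx; simp; intro h; rw [h] at hx; exact absurd hx.1 (by norm_num))).integrableOn_Icc
  have : Set.Ioc 0 (π/2) ⊆ Set.Ioc 0 1 ∪ Set.Icc 1 (π/2) := by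
    intro x hx
    rcases le_or_gt x 1 with h | h
    · exact Or.inl ⟨hx.1, h⟩
    · exact Or.inr ⟨h.le, hx.2⟩
  exact (h1.union h2).mono_set this

lemma my_II_log_sin : IntervalIntegrable (fun x => Real.log (Real.sin x)) volume 0 (π/2) := by
  rw [intervalIntegrable_iff_integrableOn_Ioc_of_le (by positivity)]
  have hbound : IntegrableOn (fun x => |Real.log x| + Real.log (π/2)) (Set.Ioc 0 (π/2)) :=
    my_integrableOn_log.abs.add (integrableOn_const measure_Ioc_lt_top.ne)
  refine Integrable.mono hbound
    ((Real.measurable_log.comp Real.measurable_sin).aestronglyMeasurable) ?_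
  rw [ae_restrict_iff' measurableSet_Ioc]
  filter_upwards with x hx
  have hπ : 0 < π := Real.pi_pos
  have hs : 0 < Real.sin x := Real.sin_pos_of_pos_of_lt_pi hx.1 (lt_of_le_of_lt hx.2 (by linarith))
  have h1 : Real.log (Real.sin x) ≤ 0 := Real.log_nonpos hs.le (Real.sin_le_one x)
  have h2 : 2/π * x ≤ Real.sin x := Real.mul_le_sin hx.1.le hx.2
  have h3 : Real.log (2/π * x) ≤ Real.log (Real.sin x) :=
    Real.log_le_log (mul_pos (by positivity) hx.1) h2
  have h4 : Real.log (2/π * x) = -Real.log (π/2) + Real.log x := by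
    rw [Real.log_mul (by positivity) hx.1.ne', ← Real.log_inv, inv_div]
  have h5 : 0 ≤ Real.log (π/2) := Real.log_nonneg (by nlinarith [Real.pi_gt_three])
  have h6 : -|Real.log x| ≤ Real.log x := neg_abs_le _
  rw [Real.norm_eq_abs, Real.norm_eq_abs, abs_of_nonpos h1,
    abs_of_nonneg (by positivity)]
  rw [h4] at h3
  linarith

lemma my_II_log_sin' : IntervalIntegrable (fun x => Real.log (Real.sin x)) volume (π/2) π := by
  have h := my_II_log_sin.comp_sub_left π
  simp only [Real.sin_pi_sub] at h
  have e1 : π - π/2 = π/2 := by ring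
  rw [e1, sub_zero] at h
  exact h.symm

lemma my_II_log_cos : IntervalIntegrable (fun x => Real.log (Real.cos x)) volume 0 (π/2) := by
  have h := my_II_log_sin.comp_sub_left (π/2)
  simp only [Real.sin_pi_div_two_sub] at h
  have h2 := h.symm
  simpa using h2

lemma my_integral_log_sin : ∫ x in (0:ℝ)..(π/2), Real.log (Real.sin x) = -(π/2) * Real.log 2 := by
  set I := ∫ x in (0:ℝ)..(π/2), Real.log (Real.sin x) with hI
  have hrefl : ∫ x in (π/2:ℝ)..π, Real.log (Real.sin x) = I := by
    have h := intervalIntegral.integral_comp_sub_left (a := (0:ℝ)) (b := π/2)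
      (fun x => Real.log (Real.sin x)) π
    simp only [Real.sin_pi_sub] at h
    have e1 : π - π/2 = π/2 := by ring
    rw [e1, sub_zero] at h
    exact h.symm
  have hfull : ∫ x in (0:ℝ)..π, Real.log (Real.sin x) = 2 * I := by
    rw [← intervalIntegral.integral_add_adjacent_intervals my_II_log_sin my_II_log_sin', hrefl]
    ring
  have hdouble : ∫ x in (0:ℝ)..(π/2), Real.log (Real.sin (2*x)) = I := by
    have h := intervalIntegral.integral_comp_mul_left (a := (0:ℝ)) (b := π/2)
      (fun x => Real.log (Real.sin x)) (c := 2) two_ne_zero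
    simp only [mul_zero] at h
    have e1 : 2 * (π/2) = π := by ring
    rw [e1, hfull] at h
    rw [h]
    simp
  have hcos : ∫ x in (0:ℝ)..(π/2), Real.log (Real.cos x) = I := by
    have h := intervalIntegral.integral_comp_sub_left (a := (0:ℝ)) (b := π/2)
      (fun x => Real.log (Real.sin x)) (π/2)
    simp only [Real.sin_pi_div_two_sub] at h
    simpa using h
  have hII2 : IntervalIntegrable (fun x => Real.log (Real.sin (2*x))) volume 0 (π/2) := by
    have h := (my_II_log_sin.trans my_II_log_sin').comp_mul_left (c := 2)
    simpa using h
  have key : I + I = I - (π/2) * Real.log 2 := by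
    calc I + I = ∫ x in (0:ℝ)..(π/2), (Real.log (Real.sin x) + Real.log (Real.cos x)) := by
          rw [intervalIntegral.integral_add my_II_log_sin my_II_log_cos, hcos]
      _ = ∫ x in (0:ℝ)..(π/2), (Real.log (Real.sin (2*x)) - Real.log 2) := by
          apply intervalIntegral.integral_congr_ae
          have hne : ∀ᵐ x : ℝ, x ≠ π/2 := by
            refine ae_iff.2 ?_
            simp only [ne_eq, not_not]
            simpa using measure_singleton (π/2 : ℝ)
          filter_upwards [hne] with x hx hxI
          rw [Set.uIoc_of_le (by positivity)] at hxI
          have hx1 : 0 < x := hxI.1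
          have hx2 : x < π/2 := lt_of_le_of_ne hxI.2 hx
          have hπ : 0 < π := Real.pi_pos
          have hs : 0 < Real.sin x := Real.sin_pos_of_pos_of_lt_pi hx1 (by linarith)
          have hc : 0 < Real.cos x := Real.cos_pos_of_mem_Ioo ⟨by linarith, hx2⟩
          have e : Real.sin (2*x) = 2 * (Real.sin x * Real.cos x) := by
            rw [Real.sin_two_mul]; ring
          rw [e, Real.log_mul two_ne_zero (mul_pos hs hc).ne',
            Real.log_mul hs.ne' hc.ne']
          ring
      _ = I - (π/2) * Real.log 2 := by
          rw [intervalIntegral.integral_sub hII2 intervalIntegrable_const, hdouble,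
            intervalIntegral.integral_const]
          simp
  linarith

lemma my_integral_cos2_log_sin :
    ∫ x in (0:ℝ)..(π/2), Real.cos (2*x) * Real.log (Real.sin x) = -(π/4) := by
  set F : ℝ → ℝ := fun θ => (Real.sin θ * Real.log (Real.sin θ)) * Real.cos θ
    - θ/2 - Real.sin (2*θ)/4 with hF
  have hπ : 0 < π := Real.pi_pos
  have hFc : Continuous F := by
    refine Continuous.sub (Continuous.sub ?_ (continuous_id.div_const 2)) ?_
    · exact (Real.continuous_mul_log.comp Real.continuous_sin).mul Real.continuous_cos
    · exact (Real.continuous_sin.comp (continuous_const.mul continuous_id)).div_const 4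
  have hderiv : ∀ x ∈ Set.Ioo (0:ℝ) (π/2),
      HasDerivAt F (Real.cos (2*x) * Real.log (Real.sin x)) x := by
    intro x hx
    have hs : 0 < Real.sin x := Real.sin_pos_of_pos_of_lt_pi hx.1 (by linarith [hx.2])
    have hlog : HasDerivAt (fun θ => Real.log (Real.sin θ)) ((Real.sin x)⁻¹ * Real.cos x) x :=
      (Real.hasDerivAt_log hs.ne').comp x (Real.hasDerivAt_sin x)
    have h1 : HasDerivAt (fun θ => Real.sin θ * Real.log (Real.sin θ))
        (Real.cos x * Real.log (Real.sin x) + Real.sin x * ((Real.sin x)⁻¹ * Real.cos x)) x :=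
      (Real.hasDerivAt_sin x).mul hlog
    have h2 : HasDerivAt (fun θ => (Real.sin θ * Real.log (Real.sin θ)) * Real.cos θ)
        ((Real.cos x * Real.log (Real.sin x) + Real.sin x * ((Real.sin x)⁻¹ * Real.cos x)) * Real.cos x
          + (Real.sin x * Real.log (Real.sin x)) * (-Real.sin x)) x :=
      h1.mul (Real.hasDerivAt_cos x)
    have h3 : HasDerivAt (fun θ : ℝ => θ/2) (1/2) x := (hasDerivAt_id x).div_const 2
    have h4 : HasDerivAt (fun θ : ℝ => Real.sin (2*θ)/4) (Real.cos (2*x) * 2 / 4) x := by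
      have hin : HasDerivAt (fun θ : ℝ => 2*θ) 2 x := by
        simpa using (hasDerivAt_id x).const_mul (2:ℝ)
      exact ((Real.hasDerivAt_sin (2*x)).comp x hin).div_const 4
    have h5 := (h2.sub h3).sub h4
    refine h5.congr_deriv (Eq.symm ?_)
    have hc2 : Real.cos (2*x) = 2 * Real.cos x ^ 2 - 1 := Real.cos_two_mul x
    have hsq : Real.sin x ^ 2 = 1 - Real.cos x ^ 2 := Real.sin_sq x
    have hterm : Real.sin x * ((Real.sin x)⁻¹ * Real.cos x) = Real.cos x := by
      field_simp
    rw [hterm]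
    linear_combination (Real.log (Real.sin x) + 1/2) * hc2 + Real.log (Real.sin x) * hsq
  have hint : IntervalIntegrable (fun x => Real.cos (2*x) * Real.log (Real.sin x)) volume 0 (π/2) :=
    my_II_log_sin.continuousOn_mul (Continuous.continuousOn (by continuity))
  have h0 : F 0 = 0 := by simp [hF]
  have hb : F (π/2) = -(π/4) := by
    have e1 : 2 * (π/2) = π := by ring
    simp [hF, e1, Real.sin_pi]
    ring
  have := intervalIntegral.integral_eq_sub_of_hasDerivAt_of_tendsto (by positivity) hderiv hint
    ((hFc.tendsto 0).mono_left nhdsWithin_le_nhds)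
    ((hFc.tendsto (π/2)).mono_left nhdsWithin_le_nhds)
  rw [this, h0, hb]
  ring

lemma my_integral_cossq_log_sin :
    ∫ x in (0:ℝ)..(π/2), Real.cos x ^ 2 * Real.log (Real.sin x)
      = -(π / 8) * (2 * Real.log 2 + 1) := by
  have hint : IntervalIntegrable (fun x => Real.cos (2*x) * Real.log (Real.sin x)) volume 0 (π/2) :=
    my_II_log_sin.continuousOn_mul (Continuous.continuousOn (by continuity))
  have h1 : ∫ x in (0:ℝ)..(π/2), Real.cos x ^ 2 * Real.log (Real.sin x)
      = ∫ x in (0:ℝ)..(π/2), ((1/2) * Real.log (Real.sin x)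
        + (1/2) * (Real.cos (2*x) * Real.log (Real.sin x))) := by
    apply intervalIntegral.integral_congr
    intro x _
    show Real.cos x ^ 2 * Real.log (Real.sin x) = _
    rw [Real.cos_sq]
    ring
  rw [h1, intervalIntegral.integral_add (my_II_log_sin.const_mul _) (hint.const_mul _),
    intervalIntegral.integral_const_mul, intervalIntegral.integral_const_mul,
    my_integral_log_sin, my_integral_cos2_log_sin]
  ring

theorem integral_sqrt_one_sub_sq_mul_log :
    ∫ x in (0:ℝ)..1, Real.sqrt (1 - x ^ 2) * Real.log x
      = -(π / 8) * (2 * Real.log 2 + 1) := by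
  have hπ : 0 < π := Real.pi_pos
  have himg : Real.sin '' Set.Ioo 0 (π/2) = Set.Ioo (0:ℝ) 1 := by
    ext y
    constructor
    · rintro ⟨θ, hθ, rfl⟩
      refine ⟨Real.sin_pos_of_pos_of_lt_pi hθ.1 (by linarith [hθ.2]), ?_⟩
      have := Real.strictMonoOn_sin ⟨by linarith [hθ.1], by linarith [hθ.2]⟩
        ⟨by linarith, le_refl _⟩ hθ.2
      rwa [Real.sin_pi_div_two] at this
    · intro hy
      exact ⟨Real.arcsin y, ⟨Real.arcsin_pos.2 hy.1, Real.arcsin_lt_pi_div_two.2 hy.2⟩,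
        Real.sin_arcsin (by linarith [hy.1]) hy.2.le⟩
  have hchg := integral_image_eq_integral_abs_deriv_smul (measurableSet_Ioo (a := (0:ℝ)) (b := π/2))
    (fun x _ => (Real.hasDerivAt_sin x).hasDerivWithinAt)
    (Real.injOn_sin.mono (by
      intro θ hθ
      rw [Set.mem_Ioo] at hθ
      exact ⟨by linarith [hθ.1], hθ.2.le⟩))
    (fun x => Real.sqrt (1 - x ^ 2) * Real.log x)
  rw [himg] at hchg
  have hcongr : ∫ θ in Set.Ioo (0:ℝ) (π/2),
        |Real.cos θ| • (Real.sqrt (1 - Real.sin θ ^ 2) * Real.log (Real.sin θ))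
      = ∫ θ in Set.Ioo (0:ℝ) (π/2), Real.cos θ ^ 2 * Real.log (Real.sin θ) := by
    apply MeasureTheory.setIntegral_congr_fun measurableSet_Ioo
    intro θ hθ
    show |Real.cos θ| • (Real.sqrt (1 - Real.sin θ ^ 2) * Real.log (Real.sin θ)) = _
    have hc : 0 < Real.cos θ := Real.cos_pos_of_mem_Ioo ⟨by linarith [hθ.1], hθ.2⟩
    have hsq : Real.sqrt (1 - Real.sin θ ^ 2) = Real.cos θ := by
      rw [← Real.cos_sq', Real.sqrt_sq hc.le]
    rw [smul_eq_mul, hsq, abs_of_pos hc]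
    ring
  rw [intervalIntegral.integral_of_le zero_le_one, MeasureTheory.integral_Ioc_eq_integral_Ioo,
    hchg, hcongr, ← MeasureTheory.integral_Ioc_eq_integral_Ioo,
    ← intervalIntegral.integral_of_le (by positivity : (0:ℝ) ≤ π/2)]
  exact my_integral_cossq_log_sin
end

section
/- For every real a > 0, ∫_0^1 √(1 - x²) · log(1 + a x²) dx = (π/2)·( log((1 + √(1+a))/2) + (1/2)·(1 - √(1+a))/(1 + √(1+a)) ). -/
open Real MeasureTheory intervalIntegral

lemma aux1 (t : ℝ) (ht : 0 < t) :
    ∫ x in (0:ℝ)..1, x ^ 2 * Real.sqrt (1 - x ^ 2) / (1 + t * x ^ 2)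
      = π / (4 * (1 + Real.sqrt (1 + t)) ^ 2) := by
  set s := Real.sqrt (1 + t) with hs_def
  have hs2 : s ^ 2 = 1 + t := Real.sq_sqrt (by linarith)
  have hs0 : 0 ≤ s := Real.sqrt_nonneg _
  have hs1 : 1 ≤ s := by nlinarith
  set H : ℝ → ℝ := fun x => (1/(2*t)) * (x * Real.sqrt (1 - x ^ 2) + Real.arcsin x)
      + (1/t^2) * Real.arcsin x
      - (s/t^2) * Real.arcsin (s * x / Real.sqrt (1 + t * x ^ 2)) with hH
  have hqpos : ∀ x : ℝ, 0 < 1 + t * x ^ 2 := fun x => by positivity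
  have hqs : ∀ x : ℝ, Real.sqrt (1 + t * x ^ 2) ≠ 0 := fun x =>
    (Real.sqrt_pos.mpr (hqpos x)).ne'
  have hc1 : Continuous fun x:ℝ => 1 - x^2 := continuous_const.sub (continuous_pow 2)
  have hc2 : Continuous fun x:ℝ => 1 + t*x^2 :=
    continuous_const.add (continuous_const.mul (continuous_pow 2))
  have hcont : ContinuousOn H (Set.Icc 0 1) := by
    apply Continuous.continuousOn
    rw [hH]
    apply Continuous.sub
    · apply Continuous.add
      · exact continuous_const.mul ((continuous_id.mul hc1.sqrt).add
          Real.continuous_arcsin)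
      · exact continuous_const.mul Real.continuous_arcsin
    · exact continuous_const.mul (Real.continuous_arcsin.comp
        ((continuous_const.mul continuous_id).div hc2.sqrt hqs))
  have hderiv : ∀ x ∈ Set.Ioo (0:ℝ) 1, HasDerivWithinAt H
      (x ^ 2 * Real.sqrt (1 - x ^ 2) / (1 + t * x ^ 2)) (Set.Ioi x) x := by
    intro x hx
    obtain ⟨hx0, hx1⟩ := hx
    have hr2 : (0:ℝ) < 1 - x ^ 2 := by nlinarith
    set r := Real.sqrt (1 - x ^ 2) with hr_def
    have hr : r ^ 2 = 1 - x ^ 2 := Real.sq_sqrt hr2.le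
    have hrpos : 0 < r := Real.sqrt_pos.mpr hr2
    set q := 1 + t * x ^ 2 with hq_def
    have hqp : 0 < q := hqpos x
    set sq := Real.sqrt q with hsq_def
    have hsq : sq ^ 2 = q := Real.sq_sqrt hqp.le
    have hsqpos : 0 < sq := Real.sqrt_pos.mpr hqp
    have hinner : HasDerivAt (fun y : ℝ => 1 - y ^ 2) (-(2*x)) x := by
      exact ((hasDerivAt_const x (1:ℝ)).sub (hasDerivAt_pow 2 x)).congr_deriv (by norm_num)
    have h1 : HasDerivAt (fun y : ℝ => Real.sqrt (1 - y ^ 2)) (-(2*x)/(2*r)) x :=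
      hinner.sqrt (by nlinarith)
    have h2 : HasDerivAt (fun y : ℝ => y * Real.sqrt (1 - y ^ 2))
        (1 * r + x * (-(2*x)/(2*r))) x := (hasDerivAt_id' x).mul h1
    have h3 : HasDerivAt Real.arcsin (1 / r) x := by
      have := Real.hasDerivAt_arcsin (by nlinarith : x ≠ -1) (by nlinarith : x ≠ 1)
      simpa [hr_def] using this
    have hD : HasDerivAt (fun y : ℝ => Real.sqrt (1 + t * y ^ 2)) ((t*(2*x))/(2*sq)) x := by
      have h : HasDerivAt (fun y : ℝ => 1 + t * y ^ 2) (t*(2*x)) x := by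
        exact ((hasDerivAt_const x (1:ℝ)).add ((hasDerivAt_pow 2 x).const_mul t)).congr_deriv (by norm_num)
      exact h.sqrt hqp.ne'
    have hN : HasDerivAt (fun y : ℝ => s * y) s x := by
      simpa using (hasDerivAt_id x).const_mul s
    have hu : HasDerivAt (fun y : ℝ => s * y / Real.sqrt (1 + t * y ^ 2))
        ((s * sq - s * x * ((t*(2*x))/(2*sq))) / sq ^ 2) x := hN.div hD hsqpos.ne'
    have hu' : (s * sq - s * x * ((t*(2*x))/(2*sq))) / sq ^ 2 = s / (q * sq) := by
      have h : s * sq - s * x * ((t*(2*x))/(2*sq)) = s / sq := by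
        field_simp
        linear_combination hsq + hq_def
      rw [h, div_div, ← hsq]
      ring_nf
    rw [hu'] at hu
    have hux2 : (s * x / sq) ^ 2 < 1 := by
      rw [div_pow, div_lt_one (by positivity)]
      nlinarith
    have hne1 : s * x / sq ≠ 1 := by
      intro h; rw [h] at hux2; norm_num at hux2
    have hnem1 : s * x / sq ≠ -1 := by
      intro h; rw [h] at hux2; norm_num at hux2
    have h5 : HasDerivAt (fun y : ℝ => Real.arcsin (s * y / Real.sqrt (1 + t * y ^ 2)))
        (1 / Real.sqrt (1 - (s * x / sq) ^ 2) * (s / (q * sq))) x := by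
      have := (Real.hasDerivAt_arcsin hnem1 hne1).comp x hu
      simpa [Function.comp_def, hsq_def, hq_def] using this
    have hw : Real.sqrt (1 - (s * x / sq) ^ 2) = r / sq := by
      have h : 1 - (s * x / sq) ^ 2 = (1 - x ^ 2) / q := by
        rw [div_pow, hsq]
        field_simp
        linear_combination (x^2*q - t*x^4 - 2*x^2)*hs2 + x^2*(1+t)*hq_def
      rw [h, Real.sqrt_div hr2.le, hr_def, hsq_def]
    rw [hw] at h5
    have hH' : HasDerivAt H
        ((1/(2*t)) * (1 * r + x * (-(2*x)/(2*r)) + 1/r) + (1/t^2) * (1/r)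
          - (s/t^2) * (1 / (r / sq) * (s / (q * sq)))) x := by
      rw [hH]
      exact (((h2.add h3).const_mul (1/(2*t))).add (h3.const_mul (1/t^2))).sub
        (h5.const_mul (s/t^2))
    have halg : (1/(2*t)) * (1 * r + x * (-(2*x)/(2*r)) + 1/r) + (1/t^2) * (1/r)
          - (s/t^2) * (1 / (r / sq) * (s / (q * sq))) = x ^ 2 * r / q := by
      clear_value r q sq s
      clear hH' h5 hu hw hcont hH
      have h1 : (s/t^2) * (1/(r/sq) * (s/(q*sq))) = (1+t)/(t^2*(r*q)) := by
        rw [one_div_div]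
        field_simp
        linear_combination hs2
      rw [h1]
      field_simp
      linear_combination (t*q - 2*t^2*x^2) * hr + (t*(2-2*x^2)+2) * hq_def
    rw [halg] at hH'
    exact hH'.hasDerivWithinAt
  have hint : IntervalIntegrable (fun x => x ^ 2 * Real.sqrt (1 - x ^ 2) / (1 + t * x ^ 2))
      volume 0 1 := by
    exact (((continuous_pow 2).mul hc1.sqrt).div
      hc2 (fun x => (hqpos x).ne')).intervalIntegrable 0 1
  rw [integral_eq_sub_of_hasDeriv_right_of_le (by norm_num) hcont hderiv hint]
  have hH1 : H 1 = π / (4 * (1 + s) ^ 2) := by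
    have hsne : s ≠ 0 := by linarith
    rw [hH]
    simp only [one_pow, mul_one]
    rw [← hs_def, div_self hsne, Real.arcsin_one,
      show (1:ℝ) - 1 = 0 by norm_num, Real.sqrt_zero]
    have ht' : t ≠ 0 := ht.ne'
    have h1s : (1:ℝ) + s ≠ 0 := by nlinarith
    field_simp
    linear_combination (4*π*(t+2-2*s) - 16*π)*hs2
  have hH0 : H 0 = 0 := by
    rw [hH]; norm_num
  rw [hH1, hH0, sub_zero]


lemma aux2 (a x : ℝ) (ha : 0 ≤ a) :
    ∫ t in (0:ℝ)..a, x ^ 2 / (1 + t * x ^ 2) = Real.log (1 + a * x ^ 2) := by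
  have hpos : ∀ t ∈ Set.uIcc (0:ℝ) a, 0 < 1 + t * x ^ 2 := by
    intro t htm
    rw [Set.uIcc_of_le ha] at htm
    nlinarith [htm.1, sq_nonneg x]
  have hderiv : ∀ t ∈ Set.uIcc (0:ℝ) a,
      HasDerivAt (fun u => Real.log (1 + u * x ^ 2)) (x ^ 2 / (1 + t * x ^ 2)) t := by
    intro t htm
    have h : HasDerivAt (fun u : ℝ => 1 + u * x ^ 2) (x ^ 2) t := by
      simpa using (hasDerivAt_mul_const (x ^ 2)).const_add 1
    exact h.log (hpos t htm).ne'
  have hint : IntervalIntegrable (fun t => x ^ 2 / (1 + t * x ^ 2)) volume 0 a := by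
    apply ContinuousOn.intervalIntegrable
    exact continuousOn_const.div
      (continuous_const.add (continuous_id.mul continuous_const)).continuousOn
      (fun t htm => (hpos t htm).ne')
  rw [integral_eq_sub_of_hasDerivAt hderiv hint]
  norm_num

lemma aux4 (a : ℝ) (ha : 0 ≤ a) :
    ∫ t in (0:ℝ)..a, π / (4 * (1 + Real.sqrt (1 + t)) ^ 2)
      = (π / 2) * (Real.log ((1 + Real.sqrt (1 + a)) / 2)
          + (1 / 2) * (1 - Real.sqrt (1 + a)) / (1 + Real.sqrt (1 + a))) := by
  set R : ℝ → ℝ := fun u => (π / 2) * (Real.log ((1 + Real.sqrt (1 + u)) / 2)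
      + (1 / 2) * (1 - Real.sqrt (1 + u)) / (1 + Real.sqrt (1 + u))) with hR
  have hderiv : ∀ t ∈ Set.uIcc (0:ℝ) a,
      HasDerivAt R (π / (4 * (1 + Real.sqrt (1 + t)) ^ 2)) t := by
    intro t htm
    rw [Set.uIcc_of_le ha] at htm
    have ht0 : 0 ≤ t := htm.1
    have h1t : (0:ℝ) < 1 + t := by linarith
    set s := Real.sqrt (1 + t) with hs_def
    have hs2 : s ^ 2 = 1 + t := Real.sq_sqrt h1t.le
    have hs0 : 0 ≤ s := Real.sqrt_nonneg _
    have hs1 : 1 ≤ s := by nlinarith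
    have hspos : 0 < s := by linarith
    have h1s : (0:ℝ) < 1 + s := by linarith
    have hs : HasDerivAt (fun u : ℝ => Real.sqrt (1 + u)) (1 / (2 * s)) t := by
      have h : HasDerivAt (fun u : ℝ => 1 + u) 1 t := by
        simpa using (hasDerivAt_id t).const_add 1
      simpa using h.sqrt h1t.ne'
    have hlog : HasDerivAt (fun u : ℝ => Real.log ((1 + Real.sqrt (1 + u)) / 2))
        ((1 / (2 * s)) / 2 / ((1 + s) / 2)) t := by
      have hv : HasDerivAt (fun u : ℝ => (1 + Real.sqrt (1 + u)) / 2) ((1 / (2 * s)) / 2) t :=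
        (hs.const_add 1).div_const 2
      exact hv.log (by positivity)
    have hnum : HasDerivAt (fun u : ℝ => (1 / 2) * (1 - Real.sqrt (1 + u)))
        ((1 / 2) * (-(1 / (2 * s)))) t := by
      exact ((hs.const_sub 1).const_mul (1/2))
    have hden : HasDerivAt (fun u : ℝ => 1 + Real.sqrt (1 + u)) (1 / (2 * s)) t :=
      hs.const_add 1
    have hfrac : HasDerivAt (fun u : ℝ => (1 / 2) * (1 - Real.sqrt (1 + u)) / (1 + Real.sqrt (1 + u)))
        (((1 / 2) * (-(1 / (2 * s))) * (1 + s) - (1 / 2) * (1 - s) * (1 / (2 * s))) / (1 + s) ^ 2) t :=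
      hnum.div hden h1s.ne'
    have hcomb := ((hlog.add hfrac).const_mul (π / 2))
    rw [hR]
    refine hcomb.congr_deriv ?_
    have h2s : (2:ℝ) * s ≠ 0 := by positivity
    field_simp
    ring
  have hint : IntervalIntegrable (fun t => π / (4 * (1 + Real.sqrt (1 + t)) ^ 2)) volume 0 a := by
    apply Continuous.intervalIntegrable
    apply continuous_const.div
    · have : Continuous fun t : ℝ => Real.sqrt (1 + t) :=
        Real.continuous_sqrt.comp (continuous_const.add continuous_id)
      continuity
    · intro t
      have : 0 ≤ Real.sqrt (1 + t) := Real.sqrt_nonneg _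
      positivity
  rw [integral_eq_sub_of_hasDerivAt hderiv hint]
  have hR0 : R 0 = 0 := by
    rw [hR]
    norm_num
  rw [hR0, sub_zero]


lemma aux3 (a : ℝ) (ha : 0 < a) :
    ∫ x in (0:ℝ)..1, (∫ t in (0:ℝ)..a, x ^ 2 * Real.sqrt (1 - x ^ 2) / (1 + t * x ^ 2))
      = ∫ t in (0:ℝ)..a, (∫ x in (0:ℝ)..1, x ^ 2 * Real.sqrt (1 - x ^ 2) / (1 + t * x ^ 2)) := by
  have hI : IntegrableOn (fun p : ℝ × ℝ => p.1 ^ 2 * Real.sqrt (1 - p.1 ^ 2) / (1 + p.2 * p.1 ^ 2))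
      (Set.Ioc (0:ℝ) 1 ×ˢ Set.Ioc (0:ℝ) a) (volume.prod volume) := by
    apply IntegrableOn.mono_set (t := Set.Icc (0:ℝ) 1 ×ˢ Set.Icc (0:ℝ) a)
    · apply ContinuousOn.integrableOn_compact (isCompact_Icc.prod isCompact_Icc)
      apply ContinuousOn.div
      · exact (((continuous_fst.pow 2).mul (Real.continuous_sqrt.comp
          (continuous_const.sub (continuous_fst.pow 2)))).continuousOn)
      · exact (continuous_const.add (continuous_snd.mul (continuous_fst.pow 2))).continuousOn
      · rintro ⟨x, t⟩ ⟨hx, ht⟩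
        have h1 : 0 ≤ t := ht.1
        have h2 : 0 ≤ x ^ 2 := sq_nonneg x
        simp only
        nlinarith
    · exact Set.prod_mono Set.Ioc_subset_Icc_self Set.Ioc_subset_Icc_self
  rw [intervalIntegral.integral_of_le (by norm_num : (0:ℝ) ≤ 1),
    intervalIntegral.integral_of_le ha.le]
  simp_rw [intervalIntegral.integral_of_le ha.le,
    intervalIntegral.integral_of_le (by norm_num : (0:ℝ) ≤ 1)]
  rw [IntegrableOn, ← Measure.prod_restrict] at hI
  exact integral_integral_swap hI


theorem integral_sqrt_one_sub_sq_mul_log_one_add (a : ℝ) (ha : 0 < a) :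
    ∫ x in (0:ℝ)..1, Real.sqrt (1 - x ^ 2) * Real.log (1 + a * x ^ 2)
      = (π / 2) * (Real.log ((1 + Real.sqrt (1 + a)) / 2)
          + (1 / 2) * (1 - Real.sqrt (1 + a)) / (1 + Real.sqrt (1 + a))) := by
  have h1 : ∫ x in (0:ℝ)..1, Real.sqrt (1 - x ^ 2) * Real.log (1 + a * x ^ 2)
      = ∫ x in (0:ℝ)..1, (∫ t in (0:ℝ)..a, x ^ 2 * Real.sqrt (1 - x ^ 2) / (1 + t * x ^ 2)) := by
    apply intervalIntegral.integral_congr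
    intro x _
    simp only
    rw [← aux2 a x ha.le, ← intervalIntegral.integral_const_mul]
    apply intervalIntegral.integral_congr
    intro t _
    simp only
    ring
  rw [h1, aux3 a ha]
  have h2 : ∫ t in (0:ℝ)..a, (∫ x in (0:ℝ)..1, x ^ 2 * Real.sqrt (1 - x ^ 2) / (1 + t * x ^ 2))
      = ∫ t in (0:ℝ)..a, π / (4 * (1 + Real.sqrt (1 + t)) ^ 2) := by
    apply intervalIntegral.integral_congr_ae
    filter_upwards with t htm
    rw [Set.uIoc_of_le ha.le] at htm
    exact aux1 t htm.1
  rw [h2, aux4 a ha.le]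
end

section
/- Let p: ℂ^L → ℝ be a nonnegative measurable function whose zero set has Lebesgue measure zero, and let f: ℂ → ℝ ∪ {∞} be continuous, attaining a unique global minimum at z_* with f(z) → ∞ as |z| → ∞, and suppose ∫_{ℂ^L} p(z) e^{-∑_{j=1}^L f(z_j)} d²z < ∞. Then for any open neighbourhood K ⊂ ℂ of z_*, there exists ε > 0 such that, as N → ∞, ∫_{ℂ^L} p(z) e^{-N ∑_{j=1}^L f(z_j)} d²z = (∫_{K^L} p(z) e^{-N ∑_{j=1}^L f(z_j)} d²z) · (1 + O(e^{-εN})). -/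
open Filter MeasureTheory

/-- Exponential localization of Laplace-type integrals: if `p ≥ 0` is measurable with
negligible zero set, `f` is continuous with a unique global minimum at `z_*` and
`f → ∞` at infinity, and the integral at `N = 1` is finite, then for every open
neighbourhood `K` of `z_*` the integral over `ℂ^L` equals the integral over `K^L`
up to a multiplicative error `1 + O(e^{-εN})`. -/
theorem laplace_localization (L : ℕ) (hL : 0 < L)
    (p : (Fin L → ℂ) → ℝ) (hp_meas : Measurable p) (hp_nonneg : ∀ z, 0 ≤ p z)
    (hp_zero : volume {z : Fin L → ℂ | p z = 0} = 0)
    (f : ℂ → ℝ) (hf_cont : Continuous f)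
    (zstar : ℂ) (hmin : ∀ z : ℂ, z ≠ zstar → f zstar < f z)
    (hinf : Tendsto f (cocompact ℂ) atTop)
    (hint : Integrable (fun z : Fin L → ℂ => p z * Real.exp (-∑ j, f (z j))))
    (K : Set ℂ) (hK : IsOpen K) (hzK : zstar ∈ K) :
    ∃ ε > 0, ∃ C : ℝ, ∀ᶠ N : ℕ in atTop,
      |(∫ z : Fin L → ℂ, p z * Real.exp (-(N : ℝ) * ∑ j, f (z j))) -
          ∫ z in Set.univ.pi (fun _ : Fin L => K),
            p z * Real.exp (-(N : ℝ) * ∑ j, f (z j))|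
        ≤ C * Real.exp (-ε * N) *
            ∫ z in Set.univ.pi (fun _ : Fin L => K),
              p z * Real.exp (-(N : ℝ) * ∑ j, f (z j)) := by
  set m := f zstar with hm
  set F : (Fin L → ℂ) → ℝ := fun z => ∑ j, f (z j) with hFdef
  have hFc : Continuous F := continuous_finset_sum _ fun j _ =>
    hf_cont.comp (continuous_apply j)
  have hfmin : ∀ z, m ≤ f z := by
    intro z
    by_cases h : z = zstar
    · simp [h, hm]
    · exact (hmin z h).le
  have hFmin : ∀ z, (L : ℝ) * m ≤ F z := by
    intro z
    calc (L : ℝ) * m = ∑ _j : Fin L, m := by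
          simp [Finset.sum_const, nsmul_eq_mul]
      _ ≤ F z := Finset.sum_le_sum fun j _ => hfmin (z j)
  -- Step A: gap on the complement of K
  obtain ⟨δ, hδpos, hδ⟩ : ∃ δ > 0, ∀ z ∉ K, m + δ ≤ f z := by
    obtain ⟨S, hS, hSf⟩ : ∃ S : Set ℂ, IsCompact S ∧ ∀ z ∉ S, m + 1 ≤ f z := by
      have h := (hasBasis_cocompact.eventually_iff).mp
        (hinf.eventually (eventually_ge_atTop (m + 1)))
      obtain ⟨S, hS, h⟩ := h
      exact ⟨S, hS, fun z hz => h hz⟩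
    by_cases hT : (S ∩ Kᶜ).Nonempty
    · have hTc : IsCompact (S ∩ Kᶜ) := hS.inter_right hK.isClosed_compl
      obtain ⟨t₀, ht₀, hmin'⟩ := hTc.exists_isMinOn hT hf_cont.continuousOn
      have ht₀K : t₀ ∉ K := ht₀.2
      have h1 : m < f t₀ := hmin t₀ (by rintro rfl; exact ht₀K hzK)
      refine ⟨min 1 (f t₀ - m), lt_min one_pos (sub_pos.mpr h1), fun z hz => ?_⟩
      by_cases hzS : z ∈ S
      · have := hmin' (⟨hzS, hz⟩ : z ∈ S ∩ Kᶜ)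
        have : f t₀ ≤ f z := this
        nlinarith [min_le_right 1 (f t₀ - m)]
      · have := hSf z hzS
        nlinarith [min_le_left 1 (f t₀ - m)]
    · refine ⟨1, one_pos, fun z hz => ?_⟩
      refine hSf z fun hzS => hT ⟨z, hzS, hz⟩
  -- Step B: small ball around zstar inside K on which f is close to m
  obtain ⟨r, hrpos, hrK, hrf⟩ : ∃ r > 0, Metric.ball zstar r ⊆ K ∧
      ∀ z ∈ Metric.ball zstar r, f z ≤ m + δ / (2 * L) := by
    have hopen : IsOpen (K ∩ f ⁻¹' Set.Iio (m + δ / (2 * L))) :=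
      hK.inter (isOpen_Iio.preimage hf_cont)
    have hmem : zstar ∈ K ∩ f ⁻¹' Set.Iio (m + δ / (2 * L)) := by
      refine ⟨hzK, ?_⟩
      have hLpos : (0 : ℝ) < L := by exact_mod_cast hL
      simp only [Set.mem_preimage, Set.mem_Iio, ← hm]
      have : 0 < δ / (2 * L) := by positivity
      linarith
    obtain ⟨r, hr, hball⟩ := Metric.isOpen_iff.mp hopen zstar hmem
    exact ⟨r, hr, fun z hz => (hball hz).1, fun z hz => (hball hz).2.le⟩
  set B : Set ℂ := Metric.ball zstar r with hBdef
  set BL : Set (Fin L → ℂ) := Set.univ.pi fun _ => B with hBLdef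
  set KL : Set (Fin L → ℂ) := Set.univ.pi fun _ => K with hKLdef
  have hKLm : MeasurableSet KL := MeasurableSet.univ_pi fun _ => hK.measurableSet
  have hBLm : MeasurableSet BL := MeasurableSet.univ_pi fun _ => measurableSet_ball
  have hBLsub : BL ⊆ KL := Set.pi_mono fun i _ => hrK
  -- bounds on F
  have hFupper : ∀ z ∈ BL, F z ≤ (L : ℝ) * m + δ / 2 := by
    intro z hz
    have hLpos : (0 : ℝ) < L := by exact_mod_cast hL
    calc F z ≤ ∑ _j : Fin L, (m + δ / (2 * L)) :=
        Finset.sum_le_sum fun j _ => hrf (z j) (Set.mem_univ_pi.mp hz j)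
      _ = (L : ℝ) * m + δ / 2 := by
        rw [Finset.sum_const, Finset.card_univ, Fintype.card_fin, nsmul_eq_mul]
        field_simp
  have hFlower : ∀ z ∈ KLᶜ, (L : ℝ) * m + δ ≤ F z := by
    intro z hz
    obtain ⟨j₀, hj₀⟩ : ∃ j, z j ∉ K := by
      by_contra h
      push_neg at h
      exact hz (Set.mem_univ_pi.mpr fun j => h j)
    have h1 : m + δ ≤ f (z j₀) := hδ _ hj₀
    have h2 : ((L : ℝ) - 1) * m ≤ ∑ j ∈ Finset.univ.erase j₀, f (z j) := by
      calc ((L : ℝ) - 1) * m = ∑ _j ∈ Finset.univ.erase j₀, m := by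
            rw [Finset.sum_const, Finset.card_erase_of_mem (Finset.mem_univ _),
              Finset.card_univ, Fintype.card_fin, nsmul_eq_mul, Nat.cast_sub hL,
              Nat.cast_one]
        _ ≤ _ := Finset.sum_le_sum fun j _ => hfmin (z j)
    have h3 : F z = f (z j₀) + ∑ j ∈ Finset.univ.erase j₀, f (z j) :=
      (Finset.add_sum_erase _ _ (Finset.mem_univ _)).symm
    linarith
  set M : ℝ := (L : ℝ) * m + δ / 2 with hMdef
  set M' : ℝ := (L : ℝ) * m + δ with hM'def
  -- integrability
  have hmeasg : ∀ N : ℕ, Measurable (fun z => p z * Real.exp (-(N : ℝ) * F z)) := by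
    intro N
    have h1 : Measurable fun z : Fin L → ℂ => -(N : ℝ) * F z := hFc.measurable.const_mul _
    exact hp_meas.mul (Real.measurable_exp.comp h1)
  have hInt : ∀ N : ℕ, 1 ≤ N →
      Integrable (fun z : Fin L → ℂ => p z * Real.exp (-(N : ℝ) * F z)) := by
    intro N hN
    have hN1 : (1 : ℝ) ≤ (N : ℝ) := by exact_mod_cast hN
    refine (hint.const_mul (Real.exp (-((N : ℝ) - 1) * ((L : ℝ) * m)))).mono'
      ((hmeasg N).aestronglyMeasurable) (Filter.Eventually.of_forall fun z => ?_)
    rw [Real.norm_eq_abs, abs_of_nonneg (mul_nonneg (hp_nonneg z) (Real.exp_nonneg _))]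
    have hkey : Real.exp (-(N : ℝ) * F z) ≤
        Real.exp (-((N : ℝ) - 1) * ((L : ℝ) * m)) * Real.exp (-F z) := by
      rw [← Real.exp_add]
      apply Real.exp_le_exp.mpr
      nlinarith [hFmin z]
    calc p z * Real.exp (-(N : ℝ) * F z)
        ≤ p z * (Real.exp (-((N : ℝ) - 1) * ((L : ℝ) * m)) * Real.exp (-F z)) :=
          mul_le_mul_of_nonneg_left hkey (hp_nonneg z)
      _ = Real.exp (-((N : ℝ) - 1) * ((L : ℝ) * m)) * (p z * Real.exp (-F z)) := by ring
  -- positivity of the base integral over BL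
  set c : ℝ := ∫ z in BL, p z * Real.exp (-F z) with hcdef
  have hcpos : 0 < c := by
    rw [hcdef]
    rw [setIntegral_pos_iff_support_of_nonneg_ae
      (Filter.Eventually.of_forall fun z => mul_nonneg (hp_nonneg z) (Real.exp_nonneg _))
      hint.integrableOn]
    have hsupp : (Function.support fun z : Fin L → ℂ => p z * Real.exp (-F z))ᶜ ⊆
        {z : Fin L → ℂ | p z = 0} := by
      intro z hz
      simp only [Function.mem_support, Set.mem_compl_iff, not_not] at hz
      have hexp : Real.exp (-F z) ≠ 0 := (Real.exp_pos _).ne'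
      exact (mul_eq_zero.mp hz).resolve_right hexp
    have hsupp0 : volume (Function.support (fun z : Fin L → ℂ => p z * Real.exp (-F z)))ᶜ = 0 :=
      measure_mono_null hsupp hp_zero
    rw [Set.inter_comm, measure_inter_conull hsupp0]
    have hne : BL.Nonempty := ⟨fun _ => zstar, Set.mem_univ_pi.mpr fun _ => Metric.mem_ball_self hrpos⟩
    have hopen : IsOpen BL := isOpen_set_pi Set.finite_univ fun i _ => Metric.isOpen_ball
    exact hopen.measure_pos volume hne
  set I₁ : ℝ := ∫ z : Fin L → ℂ, p z * Real.exp (-F z) with hI₁def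
  have hI₁c : c ≤ I₁ := by
    exact setIntegral_le_integral hint
      (Filter.Eventually.of_forall fun z => mul_nonneg (hp_nonneg z) (Real.exp_nonneg _))
  refine ⟨δ / 2, by positivity, I₁ * Real.exp (δ / 2) / c, ?_⟩
  filter_upwards [eventually_ge_atTop 1] with N hN
  have hN1 : (1 : ℝ) ≤ (N : ℝ) := by exact_mod_cast hN
  -- lower bound on the integral over KL
  have hlow : Real.exp (-((N : ℝ) - 1) * M) * c ≤
      ∫ z in KL, p z * Real.exp (-(N : ℝ) * F z) := by
    calc Real.exp (-((N : ℝ) - 1) * M) * c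
        = ∫ z in BL, Real.exp (-((N : ℝ) - 1) * M) * (p z * Real.exp (-F z)) := by
          rw [hcdef, integral_const_mul]
      _ ≤ ∫ z in BL, p z * Real.exp (-(N : ℝ) * F z) := by
          refine setIntegral_mono_on (hint.const_mul _).integrableOn
            (hInt N hN).integrableOn hBLm fun z hz => ?_
          have h1 : F z ≤ M := hFupper z hz
          have hkey : Real.exp (-((N : ℝ) - 1) * M) * Real.exp (-F z) ≤
              Real.exp (-(N : ℝ) * F z) := by
            rw [← Real.exp_add]
            apply Real.exp_le_exp.mpr
            nlinarith
          calc Real.exp (-((N : ℝ) - 1) * M) * (p z * Real.exp (-F z))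
              = p z * (Real.exp (-((N : ℝ) - 1) * M) * Real.exp (-F z)) := by ring
            _ ≤ p z * Real.exp (-(N : ℝ) * F z) :=
                mul_le_mul_of_nonneg_left hkey (hp_nonneg z)
      _ ≤ ∫ z in KL, p z * Real.exp (-(N : ℝ) * F z) :=
          setIntegral_mono_set (hInt N hN).integrableOn
            (Filter.Eventually.of_forall fun z => mul_nonneg (hp_nonneg z) (Real.exp_nonneg _))
            (HasSubset.Subset.eventuallyLE hBLsub)
  -- upper bound on the integral over the complement
  have hup : ∫ z in KLᶜ, p z * Real.exp (-(N : ℝ) * F z) ≤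
      Real.exp (-((N : ℝ) - 1) * M') * I₁ := by
    calc ∫ z in KLᶜ, p z * Real.exp (-(N : ℝ) * F z)
        ≤ ∫ z in KLᶜ, Real.exp (-((N : ℝ) - 1) * M') * (p z * Real.exp (-F z)) := by
          refine setIntegral_mono_on (hInt N hN).integrableOn
            (hint.const_mul _).integrableOn hKLm.compl fun z hz => ?_
          have h1 : M' ≤ F z := hFlower z hz
          have hkey : Real.exp (-(N : ℝ) * F z) ≤
              Real.exp (-((N : ℝ) - 1) * M') * Real.exp (-F z) := by
            rw [← Real.exp_add]
            apply Real.exp_le_exp.mpr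
            nlinarith
          calc p z * Real.exp (-(N : ℝ) * F z)
              ≤ p z * (Real.exp (-((N : ℝ) - 1) * M') * Real.exp (-F z)) :=
                mul_le_mul_of_nonneg_left hkey (hp_nonneg z)
            _ = Real.exp (-((N : ℝ) - 1) * M') * (p z * Real.exp (-F z)) := by ring
      _ = Real.exp (-((N : ℝ) - 1) * M') * ∫ z in KLᶜ, p z * Real.exp (-F z) := by
          rw [integral_const_mul]
      _ ≤ Real.exp (-((N : ℝ) - 1) * M') * I₁ := by
          refine mul_le_mul_of_nonneg_left ?_ (Real.exp_nonneg _)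
          exact setIntegral_le_integral hint
            (Filter.Eventually.of_forall fun z => mul_nonneg (hp_nonneg z) (Real.exp_nonneg _))
  have hsplit : (∫ z : Fin L → ℂ, p z * Real.exp (-(N : ℝ) * F z)) -
      (∫ z in KL, p z * Real.exp (-(N : ℝ) * F z)) =
      ∫ z in KLᶜ, p z * Real.exp (-(N : ℝ) * F z) := by
    have := integral_add_compl hKLm (hInt N hN)
    linarith
  rw [hsplit, abs_of_nonneg (setIntegral_nonneg hKLm.compl fun z _ => mul_nonneg (hp_nonneg z) (Real.exp_nonneg _))]
  calc ∫ z in KLᶜ, p z * Real.exp (-(N : ℝ) * F z)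
      ≤ Real.exp (-((N : ℝ) - 1) * M') * I₁ := hup
    _ = (I₁ * Real.exp (δ / 2) / c) * Real.exp (-(δ / 2) * N) *
        (Real.exp (-((N : ℝ) - 1) * M) * c) := by
        have hcne : c ≠ 0 := ne_of_gt hcpos
        have hexp : Real.exp (-((N : ℝ) - 1) * M') =
            Real.exp (δ / 2) * Real.exp (-(δ / 2) * N) * Real.exp (-((N : ℝ) - 1) * M) := by
          rw [← Real.exp_add, ← Real.exp_add]
          congr 1
          rw [hM'def, hMdef]; ring
        rw [hexp]; field_simp
    _ ≤ (I₁ * Real.exp (δ / 2) / c) * Real.exp (-(δ / 2) * N) *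
        ∫ z in KL, p z * Real.exp (-(N : ℝ) * F z) := by
        have hC : 0 ≤ (I₁ * Real.exp (δ / 2) / c) * Real.exp (-(δ / 2) * N) := by
          have : 0 < I₁ := lt_of_lt_of_le hcpos hI₁c
          positivity
        exact mul_le_mul_of_nonneg_left hlow hC
end

section
/- For every positive integer L, ∫_{ℂ^L} |Δ(z)|² e^{-N ∑_{j=1}^L |z_j|²} d²z = N^{-L(L+1)/2} · π^L · ∏_{j=1}^L j!, where Δ(z) = ∏_{1≤j<k≤L} (z_k - z_j) is the Vandermonde determinant, for any real N > 0. -/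
open Finset MeasureTheory

/-- The Vandermonde determinant of `L` complex points. -/
noncomputable def vandermonde (L : ℕ) (z : Fin L → ℂ) : ℂ :=
  ∏ p ∈ Finset.univ.filter (fun p : Fin L × Fin L => p.1 < p.2), (z p.2 - z p.1)

section aux
open Real Set

lemma radial_int (k : ℕ) {N : ℝ} (hN : 0 < N) :
    ∫ r in Ioi (0:ℝ), r ^ (2*k+1) * Real.exp (-N * r^2)
      = (k.factorial : ℝ) / (2 * N ^ (k+1)) := by
  have h := integral_rpow_mul_exp_neg_mul_rpow (p := 2) (q := (2*k+1 : ℕ))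
      (b := N) (by norm_num) (by push_cast; linarith [k.cast_nonneg (α := ℝ)]) hN
  rw [show ∫ r in Ioi (0:ℝ), r ^ (2*k+1) * Real.exp (-N * r^2)
      = ∫ x in Ioi (0:ℝ), x ^ ((2*k+1 : ℕ) : ℝ) * Real.exp (-N * x ^ (2:ℝ)) from
    setIntegral_congr_fun measurableSet_Ioi (fun x hx => by
      rw [Real.rpow_natCast, Real.rpow_two]), h]
  have h1 : (((2*k+1 : ℕ) : ℝ) + 1) / 2 = (k : ℝ) + 1 := by push_cast; ring
  rw [h1, Real.Gamma_nat_eq_factorial,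
    show -(((2*k+1 : ℕ):ℝ) + 1) / 2 = -((k+1 : ℕ) : ℝ) by push_cast; ring,
    Real.rpow_neg hN.le, Real.rpow_natCast]
  rw [eq_div_iff (by positivity)]
  field_simp

lemma moment (a b : ℕ) {N : ℝ} (hN : 0 < N) :
    ∫ z : ℂ, z ^ a * (starRingEnd ℂ) z ^ b * (Real.exp (-N * ‖z‖ ^ 2) : ℂ)
      = if a = b then ((Real.pi * a.factorial / N ^ (a+1) : ℝ) : ℂ) else 0 := by
  rw [← Complex.integral_comp_polarCoord_symm, polarCoord_target]
  have key : ∀ p ∈ Ioi (0:ℝ) ×ˢ Ioo (-π) π,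
      p.1 • ((Complex.polarCoord.symm p) ^ a * (starRingEnd ℂ) (Complex.polarCoord.symm p) ^ b *
        (Real.exp (-N * ‖Complex.polarCoord.symm p‖ ^ 2) : ℂ))
      = (fun r : ℝ => ((r:ℂ) ^ (a+b+1) * (Real.exp (-N * r^2) : ℂ))) p.1 *
        (fun θ : ℝ => Complex.exp ((((a:ℂ) - b) * Complex.I) * θ)) p.2 := by
    rintro ⟨r, θ⟩ ⟨hr, hθ⟩
    simp only [Complex.polarCoord_symm_apply]
    have he : (↑(Real.cos θ) + ↑(Real.sin θ) * Complex.I) = Complex.exp (θ * Complex.I) := by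
      rw [Complex.exp_mul_I, Complex.ofReal_cos, Complex.ofReal_sin]
    rw [he]
    have habs : ‖(r:ℂ) * Complex.exp ((θ:ℂ) * Complex.I)‖ = r := by
      rw [norm_mul, Complex.norm_exp]
      simp [abs_of_pos (show (0:ℝ) < r from hr), (show (0:ℝ) < r from hr).le]
    rw [habs]
    have hconj : (starRingEnd ℂ) ((r:ℂ) * Complex.exp (θ * Complex.I))
        = (r:ℂ) * Complex.exp (-θ * Complex.I) := by
      rw [map_mul, Complex.conj_ofReal, ← Complex.exp_conj]
      congr 1
      simp [Complex.conj_ofReal]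
    rw [hconj]
    rw [mul_pow, mul_pow, ← Complex.exp_nat_mul, ← Complex.exp_nat_mul]
    rw [Complex.real_smul]
    rw [show (((a:ℂ) - b) * Complex.I) * θ = a * (θ * Complex.I) + b * (-θ * Complex.I) by ring,
      Complex.exp_add]
    ring
  rw [setIntegral_congr_fun (by measurability) key, Measure.volume_eq_prod]
  beta_reduce
  rw [setIntegral_prod_mul (fun r : ℝ => (r:ℂ) ^ (a+b+1) * (Real.exp (-N * r^2) : ℂ))
    (fun θ : ℝ => Complex.exp ((((a:ℂ) - b) * Complex.I) * θ)) (Ioi 0) (Ioo (-π) π)]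
  have hrad : (∫ r in Ioi (0:ℝ), ((r:ℂ) ^ (a+b+1) * (Real.exp (-N * r^2) : ℂ)))
      = ((∫ r in Ioi (0:ℝ), r ^ (a+b+1) * Real.exp (-N * r^2) : ℝ) : ℂ) := by
    calc ∫ r in Ioi (0:ℝ), ((r:ℂ) ^ (a+b+1) * (Real.exp (-N * r^2) : ℂ))
        = ∫ r in Ioi (0:ℝ), ((r ^ (a+b+1) * Real.exp (-N * r^2) : ℝ) : ℂ) :=
          setIntegral_congr_fun measurableSet_Ioi (fun x hx => by push_cast; ring)
      _ = _ := integral_ofReal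
  rw [hrad]
  by_cases hab : a = b
  · subst hab
    simp only [sub_self, zero_mul, Complex.exp_zero, if_pos rfl]
    rw [show a + a + 1 = 2*a+1 by ring, radial_int a hN]
    rw [setIntegral_const, measureReal_def, Real.volume_Ioo,
      ENNReal.toReal_ofReal (by linarith [Real.pi_pos]), Complex.real_smul, mul_one,
      ← Complex.ofReal_mul, if_pos trivial, Complex.ofReal_inj]
    field_simp
    ring
  · have hc : ((a:ℂ) - b) * Complex.I ≠ 0 := by
      simp only [ne_eq, mul_eq_zero, Complex.I_ne_zero, or_false, sub_eq_zero]
      exact_mod_cast hab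
    have hang : (∫ θ in Ioo (-π) π, Complex.exp ((((a:ℂ) - b) * Complex.I) * θ)) = 0 := by
      rw [← integral_Ioc_eq_integral_Ioo,
        ← intervalIntegral.integral_of_le (by linarith [Real.pi_pos]),
        integral_exp_mul_complex hc]
      rw [div_eq_zero_iff]
      left
      rw [sub_eq_zero, Complex.exp_eq_exp_iff_exists_int]
      exact ⟨(a:ℤ) - b, by push_cast; ring⟩
    rw [hang, mul_zero, if_neg hab]

lemma gauss_int_complex {c : ℝ} (hc : 0 < c) :
    Integrable (fun z : ℂ => Real.exp (-c * ‖z‖ ^ 2)) := by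
  have h := (GaussianFourier.integrable_cexp_neg_mul_sq_norm_add (V := ℂ) (b := (c:ℂ))
    (by simpa using hc) 0 0).norm
  refine h.congr (Filter.Eventually.of_forall fun z => ?_)
  simp [Complex.norm_exp, ← Complex.ofReal_pow]

lemma moment_integrable (a b : ℕ) {N : ℝ} (hN : 0 < N) :
    Integrable (fun z : ℂ =>
      z ^ a * (starRingEnd ℂ) z ^ b * (Real.exp (-N * ‖z‖ ^ 2) : ℂ)) := by
  set n := a + b with hn
  set C : ℝ := 1 + (n.factorial : ℝ) * (2/N)^n with hC
  have hg : Integrable (fun z : ℂ => C * Real.exp (-(N/2) * ‖z‖ ^ 2)) :=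
    (gauss_int_complex (by positivity)).const_mul _
  refine hg.mono' ?_ (Filter.Eventually.of_forall fun z => ?_)
  · apply Continuous.aestronglyMeasurable
    apply Continuous.mul
    apply Continuous.mul
    · exact (continuous_pow a).comp continuous_id
    · exact (continuous_pow b).comp Complex.continuous_conj
    · exact Complex.continuous_ofReal.comp
        ((Real.continuous_exp.comp (by continuity)))
  · set t := ‖z‖ with ht
    have ht0 : 0 ≤ t := norm_nonneg z
    have hnorm : ‖z ^ a * (starRingEnd ℂ) z ^ b * (Real.exp (-N * t ^ 2) : ℂ)‖
        = t ^ n * Real.exp (-N * t ^ 2) := by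
      simp only [norm_mul, norm_pow, Complex.norm_conj,
        Complex.norm_real, Real.norm_eq_abs, abs_of_pos (Real.exp_pos _), ← ht, hn]
      ring
    rw [hnorm]
    have hx : (0:ℝ) ≤ N/2 * t^2 := by positivity
    have h2 : t ^ (2*n) ≤ (n.factorial : ℝ) * (2/N)^n * Real.exp (N/2 * t^2) := by
      have := Real.pow_div_factorial_le_exp (x := N/2 * t^2) hx n
      rw [div_le_iff₀ (by positivity)] at this
      have e1 : (N/2:ℝ) * (2/N) = 1 := by field_simp
      calc t ^ (2*n) = (N/2 * t^2)^n * (2/N)^n := by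
            rw [← mul_pow, pow_mul]
            congr 1
            calc t^2 = t^2 * (N/2 * (2/N)) := by rw [e1, mul_one]
              _ = N/2 * t^2 * (2/N) := by ring
          _ ≤ Real.exp (N/2*t^2) * (n.factorial : ℝ) * (2/N)^n := by
            refine mul_le_mul_of_nonneg_right ?_ (by positivity)
            exact this
          _ = (n.factorial : ℝ) * (2/N)^n * Real.exp (N/2 * t^2) := by ring
    have h1 : t ^ n ≤ C * Real.exp (N/2 * t^2) := by
      rcases le_or_gt t 1 with h | h
      · calc t ^ n ≤ 1 := pow_le_one₀ ht0 h
          _ ≤ C * 1 := by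
            rw [mul_one, hC]
            have h3 : (0:ℝ) ≤ (n.factorial : ℝ) * (2/N)^n := by positivity
            linarith
          _ ≤ C * Real.exp (N/2 * t^2) := by
            refine mul_le_mul_of_nonneg_left ?_ (by positivity)
            rw [← Real.exp_zero]
            exact Real.exp_le_exp.2 hx
      · calc t ^ n ≤ t ^ (2*n) := pow_le_pow_right₀ h.le (by omega)
          _ ≤ (n.factorial : ℝ) * (2/N)^n * Real.exp (N/2 * t^2) := h2
          _ ≤ C * Real.exp (N/2 * t^2) := by
            refine mul_le_mul_of_nonneg_right ?_ (Real.exp_pos _).le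
            rw [hC]; nlinarith
    calc t ^ n * Real.exp (-N * t ^ 2)
        ≤ (C * Real.exp (N/2 * t^2)) * Real.exp (-N * t^2) :=
          mul_le_mul_of_nonneg_right h1 (Real.exp_pos _).le
      _ = C * Real.exp (-(N/2) * t^2) := by
          rw [mul_assoc, ← Real.exp_add]; ring_nf


lemma vandermonde_eq_det (L : ℕ) (z : Fin L → ℂ) :
    vandermonde L z = (Matrix.vandermonde z).det := by
  rw [Matrix.det_vandermonde, vandermonde, Finset.prod_sigma']
  refine Finset.prod_nbij' (fun p => ⟨p.1, p.2⟩) (fun p => (p.1, p.2)) ?_ ?_ ?_ ?_ ?_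
  · rintro ⟨i, j⟩ h
    simp only [Finset.mem_filter, Finset.mem_univ, true_and] at h
    simp only [Finset.mem_sigma, Finset.mem_univ, Finset.mem_Ioi, true_and]
    exact h
  · rintro ⟨i, j⟩ h
    simp only [Finset.mem_sigma, Finset.mem_univ, Finset.mem_Ioi, true_and] at h
    simp only [Finset.mem_filter, Finset.mem_univ, true_and]
    exact h
  · rintro ⟨i, j⟩ _; rfl
  · rintro ⟨i, j⟩ _; rfl
  · rintro ⟨i, j⟩ _; rfl

lemma expand_integrand (L : ℕ) (N : ℝ) (z : Fin L → ℂ) :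
    ((‖vandermonde L z‖ ^ 2 * Real.exp (-N * ∑ j, ‖z j‖ ^ 2) : ℝ) : ℂ)
      = ∑ σ : Equiv.Perm (Fin L), ∑ τ : Equiv.Perm (Fin L),
          (((Equiv.Perm.sign σ : ℤ) : ℂ) * ((Equiv.Perm.sign τ : ℤ) : ℂ)) *
            ∏ j, (z j ^ ((σ⁻¹ j : Fin L) : ℕ) * (starRingEnd ℂ) (z j) ^ ((τ⁻¹ j : Fin L) : ℕ) *
              (Real.exp (-N * ‖z j‖ ^ 2) : ℂ)) := by
  have hΔ : (vandermonde L z) = ∑ σ : Equiv.Perm (Fin L),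
      ((Equiv.Perm.sign σ : ℤ) : ℂ) * ∏ j, z j ^ ((σ⁻¹ j : Fin L) : ℕ) := by
    rw [vandermonde_eq_det, Matrix.det_apply']
    refine Finset.sum_congr rfl fun σ _ => ?_
    congr 1
    rw [← Equiv.prod_comp σ (fun j => z j ^ ((σ⁻¹ j : Fin L) : ℕ))]
    simp [Matrix.vandermonde_apply]
  have hconj : (starRingEnd ℂ) (vandermonde L z) = ∑ τ : Equiv.Perm (Fin L),
      ((Equiv.Perm.sign τ : ℤ) : ℂ) * ∏ j, (starRingEnd ℂ) (z j) ^ ((τ⁻¹ j : Fin L) : ℕ) := by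
    rw [hΔ, map_sum]
    refine Finset.sum_congr rfl fun τ _ => ?_
    rw [map_mul, map_prod]
    simp [map_pow, map_intCast]
  have hE : ((Real.exp (-N * ∑ j, ‖z j‖ ^ 2) : ℝ) : ℂ)
      = ∏ j, ((Real.exp (-N * ‖z j‖ ^ 2) : ℝ) : ℂ) := by
    rw [Finset.mul_sum, Real.exp_sum, Complex.ofReal_prod]
  calc ((‖vandermonde L z‖ ^ 2 * Real.exp (-N * ∑ j, ‖z j‖ ^ 2) : ℝ) : ℂ)
      = (vandermonde L z * (starRingEnd ℂ) (vandermonde L z)) *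
          ((Real.exp (-N * ∑ j, ‖z j‖ ^ 2) : ℝ) : ℂ) := by
        rw [Complex.ofReal_mul]
        congr 1
        rw [← Complex.normSq_eq_norm_sq, Complex.mul_conj]
    _ = _ := by
        rw [hconj, hΔ, hE, Finset.sum_mul_sum, Finset.sum_mul]
        refine Finset.sum_congr rfl fun σ _ => ?_
        rw [Finset.sum_mul]
        refine Finset.sum_congr rfl fun τ _ => ?_
        simp only [Finset.prod_mul_distrib]
        ring

lemma fact_prod_aux : ∀ L : ℕ, (Nat.factorial L) * ∏ k ∈ Finset.range L, Nat.factorial k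
    = ∏ j ∈ Finset.Icc 1 L, Nat.factorial j := by
  intro L
  induction L with
  | zero => simp
  | succ n ih =>
    rw [Finset.prod_range_succ, Finset.prod_Icc_succ_top (Nat.le_add_left 1 n), ← ih,
      Nat.factorial_succ]
    ring

lemma sum_range_succ_id (L : ℕ) : ∑ k ∈ Finset.range L, (k+1) = L * (L+1) / 2 := by
  induction L with
  | zero => simp
  | succ n ih =>
    rw [Finset.sum_range_succ, ih]
    have h2 : 2 ∣ n * (n+1) := Nat.even_mul_succ_self n |>.two_dvd
    have e1 : (n+1) * (n+1+1) = n * (n+1) + 2*(n+1) := by ring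
    omega

end aux

/-- The complex Gaussian Vandermonde integral:
`∫_{ℂ^L} |Δ(z)|² e^{-N ∑ |z_j|²} d²z = N^{-L(L+1)/2} π^L ∏_{j=1}^L j!`. -/
theorem gaussian_vandermonde_integral (L : ℕ) (hL : 0 < L) (N : ℝ) (hN : 0 < N) :
    ∫ z : Fin L → ℂ,
        ‖vandermonde L z‖ ^ 2 * Real.exp (-N * ∑ j, ‖z j‖ ^ 2)
      = (N ^ (L * (L + 1) / 2))⁻¹ * Real.pi ^ L *
          ∏ j ∈ Finset.Icc 1 L, (Nat.factorial j : ℝ) := by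
  have hint : ∀ (σ τ : Equiv.Perm (Fin L)), Integrable (fun z : Fin L → ℂ =>
      (((Equiv.Perm.sign σ : ℤ) : ℂ) * ((Equiv.Perm.sign τ : ℤ) : ℂ)) *
        ∏ j, (z j ^ ((σ⁻¹ j : Fin L) : ℕ) * (starRingEnd ℂ) (z j) ^ ((τ⁻¹ j : Fin L) : ℕ) *
          (Real.exp (-N * ‖z j‖ ^ 2) : ℂ))) := fun σ τ =>
    (Integrable.fintype_prod_dep (f := fun j (w : ℂ) =>
      w ^ ((σ⁻¹ j : Fin L) : ℕ) * (starRingEnd ℂ) w ^ ((τ⁻¹ j : Fin L) : ℕ) *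
        (Real.exp (-N * ‖w‖ ^ 2) : ℂ))
      (fun j => moment_integrable _ _ hN)).const_mul _
  have key : ((∫ z : Fin L → ℂ,
      ‖vandermonde L z‖ ^ 2 * Real.exp (-N * ∑ j, ‖z j‖ ^ 2) : ℝ) : ℂ)
      = (Nat.factorial L : ℂ) * ∏ k : Fin L,
          ((Real.pi * (Nat.factorial (k : ℕ)) / N ^ ((k : ℕ)+1) : ℝ) : ℂ) := by
    have h0 : ((∫ z : Fin L → ℂ,
        ‖vandermonde L z‖ ^ 2 *
          Real.exp (-N * ∑ j, ‖z j‖ ^ 2) : ℝ) : ℂ)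
        = ∫ z : Fin L → ℂ, ((‖vandermonde L z‖ ^ 2 *
            Real.exp (-N * ∑ j, ‖z j‖ ^ 2) : ℝ) : ℂ) := (integral_ofReal).symm
    rw [h0, show (fun z : Fin L → ℂ =>
        ((‖vandermonde L z‖ ^ 2 *
          Real.exp (-N * ∑ j, ‖z j‖ ^ 2) : ℝ) : ℂ))
        = fun z => ∑ σ : Equiv.Perm (Fin L), ∑ τ : Equiv.Perm (Fin L),
          (((Equiv.Perm.sign σ : ℤ) : ℂ) * ((Equiv.Perm.sign τ : ℤ) : ℂ)) *
            ∏ j, (z j ^ ((σ⁻¹ j : Fin L) : ℕ) * (starRingEnd ℂ) (z j) ^ ((τ⁻¹ j : Fin L) : ℕ) *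
              (Real.exp (-N * ‖z j‖ ^ 2) : ℂ))
      from funext fun z => expand_integrand L N z]
    rw [integral_finset_sum _ (fun σ _ => integrable_finset_sum _ (fun τ _ => hint σ τ))]
    have step : ∀ σ : Equiv.Perm (Fin L),
        (∫ z : Fin L → ℂ, ∑ τ : Equiv.Perm (Fin L),
          (((Equiv.Perm.sign σ : ℤ) : ℂ) * ((Equiv.Perm.sign τ : ℤ) : ℂ)) *
            ∏ j, (z j ^ ((σ⁻¹ j : Fin L) : ℕ) * (starRingEnd ℂ) (z j) ^ ((τ⁻¹ j : Fin L) : ℕ) *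
              (Real.exp (-N * ‖z j‖ ^ 2) : ℂ)))
        = ∑ τ : Equiv.Perm (Fin L),
            (((Equiv.Perm.sign σ : ℤ) : ℂ) * ((Equiv.Perm.sign τ : ℤ) : ℂ)) *
            ∏ j, (if ((σ⁻¹ j : Fin L) : ℕ) = ((τ⁻¹ j : Fin L) : ℕ) then
              ((Real.pi * (Nat.factorial ((σ⁻¹ j : Fin L) : ℕ)) /
                N ^ (((σ⁻¹ j : Fin L) : ℕ)+1) : ℝ) : ℂ) else 0) := by
      intro σ
      rw [integral_finset_sum _ (fun τ _ => hint σ τ)]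
      refine Finset.sum_congr rfl fun τ _ => ?_
      rw [integral_const_mul]
      congr 1
      rw [MeasureTheory.volume_pi, MeasureTheory.integral_fintype_prod_eq_prod (f := fun j (w : ℂ) =>
        w ^ ((σ⁻¹ j : Fin L) : ℕ) * (starRingEnd ℂ) w ^ ((τ⁻¹ j : Fin L) : ℕ) *
          (Real.exp (-N * ‖w‖ ^ 2) : ℂ))]
      exact Finset.prod_congr rfl fun j _ => moment _ _ hN
    simp_rw [step]
    have diag : ∀ σ : Equiv.Perm (Fin L),
        (∑ τ : Equiv.Perm (Fin L),
            (((Equiv.Perm.sign σ : ℤ) : ℂ) * ((Equiv.Perm.sign τ : ℤ) : ℂ)) *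
            ∏ j, (if ((σ⁻¹ j : Fin L) : ℕ) = ((τ⁻¹ j : Fin L) : ℕ) then
              ((Real.pi * (Nat.factorial ((σ⁻¹ j : Fin L) : ℕ)) /
                N ^ (((σ⁻¹ j : Fin L) : ℕ)+1) : ℝ) : ℂ) else 0))
        = ∏ k : Fin L, ((Real.pi * (Nat.factorial (k : ℕ)) / N ^ ((k : ℕ)+1) : ℝ) : ℂ) := by
      intro σ
      rw [Finset.sum_eq_single σ]
      · simp only [if_pos rfl]
        rw [← Int.cast_mul, ← Units.val_mul, Int.units_mul_self, Units.val_one, Int.cast_one,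
          one_mul]
        exact Equiv.prod_comp σ⁻¹ (fun k => ((Real.pi * (Nat.factorial (k : ℕ)) /
          N ^ ((k : ℕ)+1) : ℝ) : ℂ))
      · intro τ _ hτ
        obtain ⟨j, hj⟩ : ∃ j, σ⁻¹ j ≠ τ⁻¹ j := by
          by_contra h
          push_neg at h
          exact hτ (by rw [← inv_inv τ, ← inv_inv σ, (Equiv.ext h : σ⁻¹ = τ⁻¹)]) |>.elim
        refine mul_eq_zero_of_right _ (Finset.prod_eq_zero (Finset.mem_univ j) ?_)
        rw [if_neg (fun hv => hj (Fin.val_injective hv))]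
      · intro h
        exact absurd (Finset.mem_univ σ) h
    simp_rw [diag]
    rw [Finset.sum_const, Finset.card_univ, Fintype.card_perm, Fintype.card_fin, nsmul_eq_mul]
  rw [show ((Nat.factorial L : ℂ)) = ((Nat.factorial L : ℝ) : ℂ) by push_cast; ring,
    ← Complex.ofReal_prod, ← Complex.ofReal_mul, Complex.ofReal_inj] at key
  rw [key]
  rw [Fin.prod_univ_eq_prod_range (fun k => Real.pi * (Nat.factorial k) / N ^ (k+1)) L]
  have hprod : ∏ k ∈ Finset.range L, (Real.pi * (Nat.factorial k : ℝ) / N ^ (k+1))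
      = (Real.pi ^ L * ∏ k ∈ Finset.range L, (Nat.factorial k : ℝ)) / N ^ (L*(L+1)/2) := by
    rw [Finset.prod_div_distrib, Finset.prod_mul_distrib, Finset.prod_const,
      Finset.card_range, Finset.prod_pow_eq_pow_sum, sum_range_succ_id]
  rw [hprod]
  have hfact : ((Nat.factorial L : ℝ)) * ∏ k ∈ Finset.range L, (Nat.factorial k : ℝ)
      = ∏ j ∈ Finset.Icc 1 L, (Nat.factorial j : ℝ) := by
    exact_mod_cast congrArg (fun n : ℕ => (n : ℝ)) (fact_prod_aux L)
  rw [← hfact]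
  ring
end

section
/- Let K ⊂ ℂ be compact and f: ℂ → ℝ smooth with a unique global minimum z_* in the interior of K, f(z_*) = 0, and Hessian ∇²f(z_*) = 2·diag(1,1) (i.e. f(z) = |z - z_*|² + O(|z - z_*|³)). Then for every γ > 0 and fixed L ∈ ℕ, there exist constants 0 < c_L ≤ C_L such that for all sufficiently large N, c_L · N^{-L - γL(L-1)/4} ≤ ∫_{K^L} |Δ(z)|^γ e^{-N ∑_{j=1}^L f(z_j)} d²z ≤ C_L · N^{-L - γL(L-1)/4}, where Δ(z) = ∏_{j<k}(z_k - z_j). -/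
set_option maxHeartbeats 1000000

open Finset Filter MeasureTheory

namespace VLB

lemma two_mul_card_pairs (L : ℕ) :
    2 * ((Finset.univ.filter (fun p : Fin L × Fin L => p.1 < p.2)).card) = L * (L - 1) := by
  have h1 : (Finset.univ.filter (fun p : Fin L × Fin L => p.1 < p.2)).card
      = ∑ j : Fin L, (j : ℕ) := by
    rw [Finset.card_eq_sum_card_fiberwise (f := fun p => p.2) (t := Finset.univ)
      (fun _ _ => Finset.mem_univ _)]
    refine Finset.sum_congr rfl (fun j _ => ?_)
    rw [← Fin.card_Iio j]
    refine Finset.card_bij' (fun p _ => p.1) (fun i _ => (i, j)) ?_ ?_ ?_ ?_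
    · intro p hp
      simp only [Finset.mem_filter, Finset.mem_univ, true_and] at hp ⊢
      rw [Finset.mem_Iio]
      rcases hp with ⟨h1, h2⟩
      exact h2 ▸ h1
    · intro i hi
      simp only [Finset.mem_Iio] at hi
      simp [hi]
    · intro p hp
      simp only [Finset.mem_filter] at hp
      exact Prod.ext rfl hp.2.symm
    · intros; rfl
  rw [h1, Fin.sum_univ_eq_sum_range (fun i => i) L, mul_comm,
    Finset.sum_range_id_mul_two]

lemma continuous_rpow_const {γ : ℝ} (hγ : 0 ≤ γ) : Continuous (fun t : ℝ => t ^ γ) :=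
  continuous_iff_continuousAt.2 fun x => Real.continuousAt_rpow_const x γ (Or.inr hγ)

lemma integrable_gauss (b : ℝ) (hb : 0 < b) :
    Integrable (fun u : ℂ => Real.exp (-b * ‖u‖ ^ 2)) := by
  have h := GaussianFourier.integrable_cexp_neg_mul_sq_norm_add (V := ℂ) (b := (b:ℂ)) (by simpa) 0 0
  refine h.norm.congr ?_
  filter_upwards with v
  rw [Complex.norm_exp]
  norm_num
  left
  norm_cast

lemma one_dim_bound (q : ℝ) (hq : 0 ≤ q) (t : ℝ) (ht : 0 ≤ t) :
    (1 + t) ^ q * Real.exp (-(1/2) * t ^ 2)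
      ≤ Real.exp (q ^ 2) * Real.exp (-(1/4) * t ^ 2) := by
  have h1 : (1 + t) ^ q ≤ Real.exp (q ^ 2 + (1/4) * t ^ 2) := by
    have h2 : (1 + t : ℝ) ≤ Real.exp t := by
      have := Real.add_one_le_exp t; linarith
    calc (1 + t) ^ q ≤ (Real.exp t) ^ q :=
          Real.rpow_le_rpow (by linarith) h2 hq
      _ = Real.exp (t * q) := by rw [← Real.exp_mul]
      _ ≤ Real.exp (q ^ 2 + (1/4) * t ^ 2) := by
          apply Real.exp_le_exp.2
          nlinarith [sq_nonneg (q - t/2)]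
  calc (1 + t) ^ q * Real.exp (-(1/2) * t ^ 2)
      ≤ Real.exp (q ^ 2 + (1/4) * t ^ 2) * Real.exp (-(1/2) * t ^ 2) := by
        apply mul_le_mul_of_nonneg_right h1 (Real.exp_nonneg _)
    _ = Real.exp (q ^ 2) * Real.exp (-(1/4) * t ^ 2) := by
        rw [← Real.exp_add, ← Real.exp_add]; ring_nf

lemma integral_scale_translate {L : ℕ} (F : (Fin L → ℂ) → ℝ) (s : ℝ) (hs : 0 < s)
    (c : Fin L → ℂ) :
    ∫ z : Fin L → ℂ, F (s • (z - c)) = (s ^ (2 * L))⁻¹ * ∫ u, F u := by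
  have h1 : ∫ z : Fin L → ℂ, F (s • (z - c)) = ∫ z : Fin L → ℂ, F (s • z) :=
    integral_sub_right_eq_self (fun w => F (s • w)) c
  rw [h1, Measure.integral_comp_smul volume F s]
  have h2 : Module.finrank ℝ (Fin L → ℂ) = 2 * L := by
    simp [Module.finrank_pi_fintype, Complex.finrank_real_complex, mul_comm]
  rw [h2, smul_eq_mul, abs_of_nonneg (inv_nonneg.2 (pow_nonneg hs.le _))]

noncomputable def FF (L : ℕ) (γ : ℝ) (u : Fin L → ℂ) : ℝ :=
  (∏ p ∈ Finset.univ.filter (fun p : Fin L × Fin L => p.1 < p.2),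
      (‖u p.1‖ + ‖u p.2‖) ^ γ) * Real.exp (-(1/2) * ∑ j, ‖u j‖ ^ 2)

lemma FF_nonneg (L : ℕ) (γ : ℝ) (u : Fin L → ℂ) : 0 ≤ FF L γ u :=
  mul_nonneg (Finset.prod_nonneg fun p _ => Real.rpow_nonneg (by positivity) _)
    (Real.exp_nonneg _)

lemma FF_continuous (L : ℕ) {γ : ℝ} (hγ : 0 ≤ γ) : Continuous (FF L γ) := by
  apply Continuous.mul
  · apply continuous_finset_prod
    intro p _
    exact (continuous_rpow_const hγ).comp
      ((continuous_norm.comp (continuous_apply p.1)).add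
        (continuous_norm.comp (continuous_apply p.2)))
  · exact Real.continuous_exp.comp (continuous_const.mul
      (continuous_finset_sum _ fun j _ => (continuous_norm.comp (continuous_apply j)).pow 2))

lemma FF_integrable (L : ℕ) {γ : ℝ} (hγ : 0 ≤ γ) : Integrable (FF L γ) := by
  set q : ℝ := γ * ((Finset.univ.filter (fun p : Fin L × Fin L => p.1 < p.2)).card : ℝ) with hqdef
  have hq : 0 ≤ q := mul_nonneg hγ (Nat.cast_nonneg _)
  have hbound : ∀ u : Fin L → ℂ, FF L γ u ≤
      ∏ j, (Real.exp (q ^ 2) * Real.exp (-(1/4) * ‖u j‖ ^ 2)) := by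
    intro u
    have hX1 : (1:ℝ) ≤ ∏ j, (1 + ‖u j‖) := by
      have h := Finset.prod_le_prod (s := Finset.univ) (f := fun _ : Fin L => (1:ℝ))
        (g := fun j => 1 + ‖u j‖) (fun _ _ => zero_le_one)
        (fun j _ => le_add_of_nonneg_right (norm_nonneg _))
      simpa using h
    set X := ∏ j, (1 + ‖u j‖) with hXdef
    have hX0 : (0:ℝ) ≤ X := le_trans zero_le_one hX1
    have h1 : (∏ p ∈ Finset.univ.filter (fun p : Fin L × Fin L => p.1 < p.2),
        (‖u p.1‖ + ‖u p.2‖) ^ γ) ≤ ∏ j, (1 + ‖u j‖) ^ q := by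
      calc (∏ p ∈ Finset.univ.filter (fun p : Fin L × Fin L => p.1 < p.2),
          (‖u p.1‖ + ‖u p.2‖) ^ γ)
          ≤ ∏ _p ∈ Finset.univ.filter (fun p : Fin L × Fin L => p.1 < p.2), X ^ γ := by
            apply Finset.prod_le_prod (fun p _ => Real.rpow_nonneg (by positivity) _)
            intro p hp
            apply Real.rpow_le_rpow (by positivity) ?_ hγ
            have hne : p.1 ≠ p.2 := ne_of_lt (Finset.mem_filter.1 hp).2
            calc ‖u p.1‖ + ‖u p.2‖ ≤ (1 + ‖u p.1‖) * (1 + ‖u p.2‖) := by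
                  nlinarith [norm_nonneg (u p.1), norm_nonneg (u p.2)]
              _ = ∏ j ∈ {p.1, p.2}, (1 + ‖u j‖) :=
                  (Finset.prod_pair (f := fun j => 1 + ‖u j‖) hne).symm
              _ = ∏ j, (if j ∈ ({p.1, p.2} : Finset (Fin L)) then (1 + ‖u j‖) else 1) := by
                  rw [Finset.prod_ite_mem, Finset.univ_inter]
              _ ≤ X := Finset.prod_le_prod
                  (fun j _ => by split_ifs <;> positivity)
                  (fun j _ => by
                    split_ifs
                    · exact le_refl _
                    · exact le_add_of_nonneg_right (norm_nonneg _))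
        _ = (X ^ γ) ^ ((Finset.univ.filter (fun p : Fin L × Fin L => p.1 < p.2)).card) :=
            Finset.prod_const _
        _ = X ^ q := by
            rw [← Real.rpow_natCast (X ^ γ), ← Real.rpow_mul hX0, hqdef]
        _ = ∏ j, (1 + ‖u j‖) ^ q := by
            rw [hXdef, ← Real.finset_prod_rpow _ _ (fun j _ => by positivity)]
    have h2 : Real.exp (-(1/2) * ∑ j, ‖u j‖ ^ 2)
        = ∏ j, Real.exp (-(1/2) * ‖u j‖ ^ 2) := by
      rw [← Real.exp_sum, Finset.mul_sum]
    calc FF L γ u ≤ (∏ j, (1 + ‖u j‖) ^ q) * Real.exp (-(1/2) * ∑ j, ‖u j‖ ^ 2) := by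
          apply mul_le_mul_of_nonneg_right h1 (Real.exp_nonneg _)
      _ = ∏ j, ((1 + ‖u j‖) ^ q * Real.exp (-(1/2) * ‖u j‖ ^ 2)) := by
          rw [h2, ← Finset.prod_mul_distrib]
      _ ≤ ∏ j, (Real.exp (q ^ 2) * Real.exp (-(1/4) * ‖u j‖ ^ 2)) := by
          apply Finset.prod_le_prod
          · intro j _; positivity
          · intro j _; exact one_dim_bound q hq _ (norm_nonneg _)
  have hInt2 : Integrable (fun (u : Fin L → ℂ) =>
      ∏ j, (Real.exp (q ^ 2) * Real.exp (-(1/4) * ‖u j‖ ^ 2))) :=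
    Integrable.fintype_prod (f := fun _ u => Real.exp (q ^ 2) * Real.exp (-(1/4) * ‖u‖ ^ 2))
      fun _ => (integrable_gauss (1/4) (by norm_num)).const_mul _
  refine hInt2.mono' (FF_continuous L hγ).aestronglyMeasurable ?_
  filter_upwards with u
  rw [Real.norm_of_nonneg (FF_nonneg L γ u)]
  exact hbound u

end VLB

/-- Laplace asymptotics with a Vandermonde factor: if `f` is smooth with a unique
global minimum `z_*` in the interior of the compact set `K`, `f(z_*) = 0`, and
`f(z) = |z - z_*|² + O(|z - z_*|³)` near `z_*`, then for any `γ > 0` and fixed `L`,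
the integral `∫_{K^L} |Δ(z)|^γ e^{-N ∑ f(z_j)} d²z` is of exact order
`N^{-L - γL(L-1)/4}`. -/
theorem vandermonde_laplace_bound (K : Set ℂ) (hK : IsCompact K)
    (f : ℂ → ℝ) (hf : ContDiff ℝ (⊤ : ℕ∞) f)
    (zstar : ℂ) (hz_int : zstar ∈ interior K) (hf0 : f zstar = 0)
    (hmin : ∀ z : ℂ, z ≠ zstar → 0 < f z)
    (hess : ∃ C > 0, ∃ δ > 0, ∀ z : ℂ, ‖z - zstar‖ ≤ δ →
      |f z - ‖z - zstar‖ ^ 2| ≤ C * ‖z - zstar‖ ^ 3)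
    (γ : ℝ) (hγ : 0 < γ) (L : ℕ) (hL : 0 < L) :
    ∃ c C : ℝ, 0 < c ∧ c ≤ C ∧ ∀ᶠ N : ℕ in atTop,
      c * (N : ℝ) ^ (-(L : ℝ) - γ * L * (L - 1) / 4)
        ≤ (∫ z in Set.univ.pi (fun _ : Fin L => K),
            ‖vandermonde L z‖ ^ γ * Real.exp (-(N : ℝ) * ∑ j, f (z j))) ∧
      (∫ z in Set.univ.pi (fun _ : Fin L => K),
          ‖vandermonde L z‖ ^ γ * Real.exp (-(N : ℝ) * ∑ j, f (z j)))
        ≤ C * (N : ℝ) ^ (-(L : ℝ) - γ * L * (L - 1) / 4) := by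
  classical
  have hγ0 : (0:ℝ) ≤ γ := hγ.le
  set pr : Finset (Fin L × Fin L) :=
    Finset.univ.filter (fun p : Fin L × Fin L => p.1 < p.2) with hprdef
  set Pn : ℕ := pr.card with hPndef
  set α : ℝ := -(L : ℝ) - γ * L * (L - 1) / 4 with hαdef
  -- cast identity for the number of pairs
  have hPcast : (Pn : ℝ) = (L : ℝ) * ((L : ℝ) - 1) / 2 := by
    have h := VLB.two_mul_card_pairs L
    have h2 : ((2 * Pn : ℕ) : ℝ) = ((L * (L - 1) : ℕ) : ℝ) := by rw [hPndef, hprdef, h]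
    push_cast [Nat.cast_sub hL] at h2
    linarith
  -- the local quadratic bounds
  obtain ⟨C₀, hC₀, δ₀, hδ₀, hhess⟩ := hess
  obtain ⟨δ₁, hδ₁, hball⟩ : ∃ ε > 0, Metric.ball zstar ε ⊆ K := by
    have h := mem_interior_iff_mem_nhds.1 hz_int
    exact Metric.mem_nhds_iff.1 h
  set δ : ℝ := min (min δ₀ (1/(2*C₀))) (δ₁/2) with hδdef
  have hδ : 0 < δ := by
    apply lt_min (lt_min hδ₀ (by positivity)) (by positivity)
  have hδK : Metric.closedBall zstar δ ⊆ K := by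
    refine subset_trans (Metric.closedBall_subset_ball ?_) hball
    calc δ ≤ δ₁/2 := min_le_right _ _
      _ < δ₁ := by linarith
  have hδδ₀ : δ ≤ δ₀ := le_trans (min_le_left _ _) (min_le_left _ _)
  have hδC₀ : δ ≤ 1/(2*C₀) := le_trans (min_le_left _ _) (min_le_right _ _)
  have hflb : ∀ z : ℂ, ‖z - zstar‖ ≤ δ → ‖z - zstar‖ ^ 2 / 2 ≤ f z := by
    intro z hz
    have h := hhess z (le_trans hz hδδ₀)
    have h2 := abs_le.1 h
    have hr0 : (0:ℝ) ≤ ‖z - zstar‖ := norm_nonneg _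
    have h3 : C₀ * ‖z - zstar‖ ^ 3 ≤ (1/2) * ‖z - zstar‖ ^ 2 := by
      have hcr : C₀ * ‖z - zstar‖ ≤ 1/2 := by
        have h4 : C₀ * ‖z - zstar‖ ≤ C₀ * δ := mul_le_mul_of_nonneg_left hz hC₀.le
        have h6 : δ * (2*C₀) ≤ 1 := (le_div_iff₀ (by positivity)).1 hδC₀
        nlinarith
      have h7 := mul_le_mul_of_nonneg_right hcr (sq_nonneg ‖z - zstar‖)
      nlinarith [h7]
    linarith [h2.1, h2.2]
  have hfub : ∀ z : ℂ, ‖z - zstar‖ ≤ δ → f z ≤ 2 * ‖z - zstar‖ ^ 2 := by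
    intro z hz
    have h := hhess z (le_trans hz hδδ₀)
    have h2 := abs_le.1 h
    have hr0 : (0:ℝ) ≤ ‖z - zstar‖ := norm_nonneg _
    have h3 : C₀ * ‖z - zstar‖ ^ 3 ≤ (1/2) * ‖z - zstar‖ ^ 2 := by
      have hcr : C₀ * ‖z - zstar‖ ≤ 1/2 := by
        have h4 : C₀ * ‖z - zstar‖ ≤ C₀ * δ := mul_le_mul_of_nonneg_left hz hC₀.le
        have h6 : δ * (2*C₀) ≤ 1 := (le_div_iff₀ (by positivity)).1 hδC₀
        nlinarith
      have h7 := mul_le_mul_of_nonneg_right hcr (sq_nonneg ‖z - zstar‖)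
      nlinarith [h7]
    linarith [h2.1, h2.2]
  have hf_nonneg : ∀ z : ℂ, 0 ≤ f z := by
    intro z
    rcases eq_or_ne z zstar with rfl | hz
    · simp [hf0]
    · exact (hmin z hz).le
  -- ε : positive lower bound for f away from zstar on K
  obtain ⟨ε, hε, hεf⟩ : ∃ ε > 0, ∀ z ∈ K, ¬(‖z - zstar‖ ≤ δ) → ε ≤ f z := by
    set K' : Set ℂ := K ∩ {z | δ ≤ ‖z - zstar‖} with hK'def
    have hK'c : IsCompact K' := hK.inter_right
      (isClosed_le continuous_const (continuous_norm.comp (continuous_id.sub continuous_const)))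
    rcases K'.eq_empty_or_nonempty with hemp | hne
    · refine ⟨1, one_pos, fun z hzK hz => ?_⟩
      exfalso
      have : z ∈ K' := ⟨hzK, le_of_lt (not_le.1 hz)⟩
      rw [hemp] at this
      exact this
    · obtain ⟨x, hxK', hx⟩ := hK'c.exists_isMinOn hne hf.continuous.continuousOn
      refine ⟨f x, ?_, fun z hzK hz => ?_⟩
      · apply hmin
        intro hxe
        rw [hxe] at hxK'
        have := hxK'.2
        simp only [Set.mem_setOf_eq, sub_self, norm_zero] at this
        linarith
      · exact hx ⟨hzK, le_of_lt (not_le.1 hz)⟩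
  -- boundedness of K
  obtain ⟨ρ₀, hρ₀⟩ := hK.isBounded.subset_closedBall 0
  set ρ : ℝ := max ρ₀ 0 with hρdef
  have hρ0 : (0:ℝ) ≤ ρ := le_max_right _ _
  have hρK : ∀ z ∈ K, ‖z‖ ≤ ρ := by
    intro z hz
    have := hρ₀ hz
    rw [Metric.mem_closedBall, dist_zero_right] at this
    exact le_trans this (le_max_left _ _)
  -- constants
  set J : ℝ := ∫ u, VLB.FF L γ u with hJdef
  have hJ0 : 0 ≤ J := integral_nonneg (VLB.FF_nonneg L γ)
  set v : ℝ := (volume (Metric.ball (0:ℂ) 1)).toReal with hvdef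
  have hv : 0 < v := by
    rw [hvdef]
    apply ENNReal.toReal_pos
    · exact (Metric.measure_ball_pos volume 0 one_pos).ne'
    · exact measure_ball_lt_top.ne
  set KL : Set (Fin L → ℂ) := Set.univ.pi (fun _ : Fin L => K) with hKLdef
  have hKLc : IsCompact KL := isCompact_univ_pi (fun _ => hK)
  have hKLm : MeasurableSet KL := hKLc.measurableSet
  have hKLfin : volume KL < ⊤ := hKLc.measure_lt_top
  set Vfin : ℝ := (volume KL).toReal with hVfindef
  have hVfin0 : 0 ≤ Vfin := ENNReal.toReal_nonneg
  set Dγ : ℝ := ((2*ρ+1) ^ γ) ^ Pn with hDγdef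
  have hDγ0 : 0 ≤ Dγ := by positivity
  set R : ℝ := 3 * (L:ℝ) with hRdef
  have hR1 : 1 ≤ R := by
    rw [hRdef]
    have : (1:ℝ) ≤ (L:ℝ) := by exact_mod_cast hL
    linarith
  set clow : ℝ := Real.exp (-(2*(L:ℝ)*R^2)) * v^L with hclowdef
  have hclow : 0 < clow := by positivity
  set Cup : ℝ := J + Dγ * Vfin with hCupdef
  have hCup0 : 0 ≤ Cup := add_nonneg hJ0 (mul_nonneg hDγ0 hVfin0)
  -- continuity and integrability of the integrand
  have hphi_cont : ∀ N : ℕ, Continuous (fun z : Fin L → ℂ =>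
      ‖vandermonde L z‖ ^ γ * Real.exp (-(N:ℝ) * ∑ j, f (z j))) := by
    intro N
    apply Continuous.mul
    · apply (VLB.continuous_rpow_const hγ0).comp
      apply continuous_norm.comp
      unfold vandermonde
      exact continuous_finset_prod _ fun p _ =>
        (continuous_apply p.2).sub (continuous_apply p.1)
    · exact Real.continuous_exp.comp (continuous_const.mul
        (continuous_finset_sum _ fun j _ => hf.continuous.comp (continuous_apply j)))
  have hIntN : ∀ N : ℕ, IntegrableOn (fun z : Fin L → ℂ =>
      ‖vandermonde L z‖ ^ γ * Real.exp (-(N:ℝ) * ∑ j, f (z j))) KL := fun N =>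
    ((hphi_cont N).continuousOn).integrableOn_compact hKLc
  have hphi_nonneg : ∀ (N : ℕ) (z : Fin L → ℂ),
      0 ≤ ‖vandermonde L z‖ ^ γ * Real.exp (-(N:ℝ) * ∑ j, f (z j)) := by
    intro N z
    positivity
  -- the abs of the vandermonde as a product
  have hvand_prod : ∀ z : Fin L → ℂ, ‖vandermonde L z‖ ^ γ
      = ∏ p ∈ pr, ‖z p.2 - z p.1‖ ^ γ := by
    intro z
    unfold vandermonde
    rw [norm_prod, Real.finset_prod_rpow _ _ (fun p _ => norm_nonneg _)]
  -- the T' set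
  set T' : Set (Fin L → ℂ) := Set.univ.pi (fun _ : Fin L => Metric.closedBall zstar δ)
    with hT'def
  have hT'm : MeasurableSet T' := MeasurableSet.univ_pi (fun _ => measurableSet_closedBall)
  refine ⟨clow, clow + Cup + 1, hclow, by linarith, ?_⟩
  have hev2 : ∀ᶠ N : ℕ in atTop, R / δ ≤ (N:ℝ) ^ ((1:ℝ)/2) := by
    have h1 : Tendsto (fun x : ℝ => x ^ ((1:ℝ)/2)) atTop atTop :=
      tendsto_rpow_atTop (by norm_num)
    exact (h1.comp tendsto_natCast_atTop_atTop).eventually_ge_atTop _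
  have hev3 : ∀ᶠ N : ℕ in atTop, ((N:ℝ)) ^ (-α) * Real.exp (-ε * (N:ℝ)) < 1 := by
    have h1 := tendsto_rpow_mul_exp_neg_mul_atTop_nhds_zero (-α) ε hε
    exact (h1.comp tendsto_natCast_atTop_atTop).eventually_lt_const one_pos
  filter_upwards [eventually_ge_atTop 1, hev2, hev3] with N hN1 hN2 hN3
  set x : ℝ := (N:ℝ) with hxdef
  have hx1 : (1:ℝ) ≤ x := by rw [hxdef]; exact_mod_cast hN1
  have hx0 : (0:ℝ) < x := lt_of_lt_of_le one_pos hx1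
  set s : ℝ := x ^ ((1:ℝ)/2) with hsdef
  have hs0 : 0 < s := Real.rpow_pos_of_pos hx0 _
  have hs1 : 1 ≤ s := by
    have := Real.rpow_le_rpow_of_exponent_le hx1 (by norm_num : (0:ℝ) ≤ 1/2)
    rwa [Real.rpow_zero] at this
  have hs2 : s ^ 2 = x := by
    rw [hsdef, ← Real.rpow_natCast (x ^ ((1:ℝ)/2)) 2, ← Real.rpow_mul hx0.le]
    norm_num
  have hs2L : s ^ (2 * L) = x ^ L := by rw [pow_mul, hs2]
  have hsP0 : 0 < s ^ (γ * (Pn:ℝ)) := Real.rpow_pos_of_pos hs0 _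
  have hxL0 : (0:ℝ) < x ^ L := pow_pos hx0 _
  have hxα : 0 < x ^ α := Real.rpow_pos_of_pos hx0 _
  -- key exponent identity
  have hexp : (s ^ (γ * (Pn:ℝ)))⁻¹ * (x ^ L)⁻¹ = x ^ α := by
    have h1 : s ^ (γ * (Pn:ℝ)) = x ^ ((1/2) * (γ * (Pn:ℝ))) := by
      rw [hsdef, ← Real.rpow_mul hx0.le]
    have h2 : (x ^ L : ℝ) = x ^ ((L:ℕ):ℝ) := (Real.rpow_natCast x L).symm
    rw [h1, h2, ← Real.rpow_neg hx0.le, ← Real.rpow_neg hx0.le,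
      ← Real.rpow_add hx0]
    congr 1
    rw [hPcast, hαdef]
    ring
  -- exp bound from hN3
  have hexp_le : Real.exp (-(ε * x)) ≤ x ^ α := by
    have h1 : x ^ (-α) * Real.exp (-ε * x) ≤ 1 := hN3.le
    have h2 : x ^ α * (x ^ (-α) * Real.exp (-ε * x)) ≤ x ^ α * 1 :=
      mul_le_mul_of_nonneg_left h1 hxα.le
    rw [mul_one, ← mul_assoc, ← Real.rpow_add hx0] at h2
    simp only [add_neg_cancel, Real.rpow_zero, one_mul] at h2
    rw [neg_mul] at h2
    exact h2
  set cm : Fin L → ℂ := fun _ => zstar with hcmdef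
  constructor
  · -- LOWER BOUND
    set cent : Fin L → ℂ := fun j => zstar + (((3*(j:ℕ) : ℕ)) : ℂ)/(s:ℂ) with hcentdef
    set TN : Set (Fin L → ℂ) := Set.univ.pi fun j => Metric.closedBall (cent j) (1/s)
      with hTNdef
    have hTNm : MeasurableSet TN := MeasurableSet.univ_pi (fun _ => measurableSet_closedBall)
    have hRs : R ≤ s * δ := by
      rw [div_le_iff₀ hδ] at hN2
      linarith
    have hcent_norm : ∀ j : Fin L, ‖cent j - zstar‖ = (3*(j:ℕ):ℝ)/s := by
      intro j
      rw [hcentdef]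
      simp only [add_sub_cancel_left]
      rw [norm_div, Complex.norm_natCast, Complex.norm_real, Real.norm_of_nonneg hs0.le]
      push_cast
      ring
    have hznorm : ∀ z ∈ TN, ∀ j, ‖z j - zstar‖ ≤ R / s := by
      intro z hz j
      have hj := hz j (Set.mem_univ j)
      rw [Metric.mem_closedBall, dist_eq_norm] at hj
      have h1 : ‖z j - zstar‖ ≤ ‖z j - cent j‖ + ‖cent j - zstar‖ := by
        have := norm_add_le (z j - cent j) (cent j - zstar)
        simpa using this
      rw [hcent_norm j] at h1
      have h2 : (3*(j:ℕ):ℝ) ≤ R - 1 := by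
        have hjL : (j:ℕ) + 1 ≤ L := j.isLt
        have : ((j:ℕ):ℝ) + 1 ≤ (L:ℝ) := by exact_mod_cast hjL
        rw [hRdef]; linarith
      calc ‖z j - zstar‖ ≤ 1/s + (3*(j:ℕ):ℝ)/s := by linarith
        _ ≤ 1/s + (R-1)/s := by gcongr
        _ = R / s := by field_simp; ring
    have hzδ : ∀ z ∈ TN, ∀ j, ‖z j - zstar‖ ≤ δ := by
      intro z hz j
      refine le_trans (hznorm z hz j) ?_
      rw [div_le_iff₀ hs0]
      calc R ≤ s * δ := hRs
        _ = δ * s := mul_comm _ _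
    have hTN_sub : TN ⊆ KL := by
      intro z hz
      intro j _
      apply hδK
      rw [Metric.mem_closedBall, dist_eq_norm]
      exact hzδ z hz j
    have hTN_fin : volume TN ≠ ⊤ := (lt_of_le_of_lt (measure_mono hTN_sub) hKLfin).ne
    -- volume of TN
    have hTN_vol : (volume TN).toReal = ((1/s)^2 * v)^L := by
      rw [hTNdef, volume_pi_pi]
      have hcb : ∀ j : Fin L, volume (Metric.closedBall (cent j) (1/s))
          = ENNReal.ofReal ((1/s)^2) * volume (Metric.ball (0:ℂ) 1) := by
        intro j
        rw [Measure.addHaar_closedBall volume (cent j) (by positivity : (0:ℝ) ≤ 1/s)]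
        congr 2
        rw [Complex.finrank_real_complex]
      simp_rw [hcb]
      rw [Finset.prod_const, Finset.card_univ, Fintype.card_fin,
        ENNReal.toReal_pow, ENNReal.toReal_mul, ENNReal.toReal_ofReal (by positivity)]
    -- pointwise lower bound on TN
    have hptlow : ∀ z ∈ TN, (s ^ (γ * (Pn:ℝ)))⁻¹ * Real.exp (-(2*(L:ℝ)*R^2))
        ≤ ‖vandermonde L z‖ ^ γ * Real.exp (-x * ∑ j, f (z j)) := by
      intro z hz
      have hvand_lb : (s ^ (γ * (Pn:ℝ)))⁻¹ ≤ ‖vandermonde L z‖ ^ γ := by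
        rw [hvand_prod z]
        have hpair : ∀ p ∈ pr, 1/s ≤ ‖z p.2 - z p.1‖ := by
          intro p hp
          have hab : p.1 < p.2 := (Finset.mem_filter.1 hp).2
          have ha := hz p.1 (Set.mem_univ _)
          have hb := hz p.2 (Set.mem_univ _)
          rw [Metric.mem_closedBall] at ha hb
          have hcc : ‖cent p.2 - cent p.1‖ = (3*((p.2:ℕ):ℝ) - 3*((p.1:ℕ):ℝ))/s := by
            rw [hcentdef]
            have : zstar + (((3*((p.2:ℕ)) : ℕ)) : ℂ)/(s:ℂ) - (zstar + (((3*((p.1:ℕ)) : ℕ)) : ℂ)/(s:ℂ))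
                = ((((3*((p.2:ℕ)) : ℕ)) : ℂ) - (((3*((p.1:ℕ)) : ℕ)) : ℂ))/(s:ℂ) := by ring
            rw [this, norm_div]
            have hnum : ((((3*((p.2:ℕ)) : ℕ)) : ℂ) - (((3*((p.1:ℕ)) : ℕ)) : ℂ))
                = (((3*((p.2:ℕ)):ℝ) - (3*((p.1:ℕ)):ℝ) : ℝ) : ℂ) := by push_cast; ring
            rw [hnum, Complex.norm_real, Complex.norm_real]
            have hle : ((p.1:ℕ):ℝ) ≤ ((p.2:ℕ):ℝ) := by exact_mod_cast hab.le
            rw [Real.norm_of_nonneg (by linarith), Real.norm_of_nonneg hs0.le]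
          have h3 : (3:ℝ) ≤ 3*((p.2:ℕ):ℝ) - 3*((p.1:ℕ):ℝ) := by
            have : ((p.1:ℕ):ℝ) + 1 ≤ ((p.2:ℕ):ℝ) := by exact_mod_cast hab
            linarith
          have htri : ‖cent p.2 - cent p.1‖ ≤ dist (cent p.2) (z p.2)
              + dist (z p.2) (z p.1) + dist (z p.1) (cent p.1) := by
            rw [← dist_eq_norm]
            exact dist_triangle4 _ _ _ _
          rw [hcc] at htri
          rw [dist_comm (cent p.2) (z p.2)] at htri
          rw [dist_eq_norm (z p.2) (z p.1)] at htri
          have h3s : (3:ℝ)/s ≤ (3*((p.2:ℕ):ℝ) - 3*((p.1:ℕ):ℝ))/s := by gcongr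
          have h31 : (3:ℝ)/s = 1/s + 1/s + 1/s := by ring
          linarith
        have hconst : ((1/s) ^ γ) ^ Pn = (s ^ (γ * (Pn:ℝ)))⁻¹ := by
          rw [one_div, Real.inv_rpow hs0.le, inv_pow, ← Real.rpow_natCast (s ^ γ) Pn,
            ← Real.rpow_mul hs0.le]
        calc (s ^ (γ * (Pn:ℝ)))⁻¹ = ∏ _p ∈ pr, (1/s) ^ γ := by
              rw [Finset.prod_const, ← hPndef, hconst]
          _ ≤ ∏ p ∈ pr, ‖z p.2 - z p.1‖ ^ γ :=
              Finset.prod_le_prod (fun p _ => by positivity)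
                (fun p hp => Real.rpow_le_rpow (by positivity) (hpair p hp) hγ0)
      have hexp_lb : Real.exp (-(2*(L:ℝ)*R^2)) ≤ Real.exp (-x * ∑ j, f (z j)) := by
        apply Real.exp_le_exp.2
        have hsum : ∑ j, f (z j) ≤ (L:ℝ) * (2*R^2/x) := by
          have h1 : ∀ j : Fin L, f (z j) ≤ 2*R^2/x := by
            intro j
            have h2 := hfub (z j) (hzδ z hz j)
            have h3 : ‖z j - zstar‖^2 ≤ (R/s)^2 :=
              pow_le_pow_left₀ (norm_nonneg _) (hznorm z hz j) 2
            have h4 : (R/s)^2 = R^2/x := by rw [div_pow, hs2]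
            rw [h4] at h3
            calc f (z j) ≤ 2*‖z j - zstar‖^2 := h2
              _ ≤ 2*(R^2/x) := by linarith
              _ = 2*R^2/x := by ring
          calc ∑ j, f (z j) ≤ ∑ _j : Fin L, (2*R^2/x) := Finset.sum_le_sum (fun j _ => h1 j)
            _ = (L:ℝ) * (2*R^2/x) := by
                rw [Finset.sum_const, Finset.card_univ, Fintype.card_fin, nsmul_eq_mul]
        have h5 : x * ∑ j, f (z j) ≤ 2*(L:ℝ)*R^2 := by
          have h6 := mul_le_mul_of_nonneg_left hsum hx0.le
          have h7 : x * ((L:ℝ) * (2*R^2/x)) = 2*(L:ℝ)*R^2 := by field_simp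
          linarith
        linarith
      exact mul_le_mul hvand_lb hexp_lb (Real.exp_nonneg _) (by positivity)
    have hIN : IntegrableOn (fun z : Fin L → ℂ =>
        ‖vandermonde L z‖ ^ γ * Real.exp (-x * ∑ j, f (z j))) KL := hIntN N
    have hconst_le : (s ^ (γ * (Pn:ℝ)))⁻¹ * Real.exp (-(2*(L:ℝ)*R^2)) * (volume TN).toReal
        ≤ ∫ z in TN, ‖vandermonde L z‖ ^ γ * Real.exp (-x * ∑ j, f (z j)) :=
      by have := setIntegral_ge_of_const_le hTNm hTN_fin hptlow (hIN.mono_set hTN_sub); rw [smul_eq_mul, mul_comm] at this; exact this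
    have hTN_KL : (∫ z in TN, ‖vandermonde L z‖ ^ γ * Real.exp (-x * ∑ j, f (z j)))
        ≤ ∫ z in KL, ‖vandermonde L z‖ ^ γ * Real.exp (-x * ∑ j, f (z j)) :=
      setIntegral_mono_set hIN (ae_of_all _ (fun z => hphi_nonneg N z))
        (HasSubset.Subset.eventuallyLE hTN_sub)
    have hvol_eq : ((1/s)^2 * v)^L = (x^L)⁻¹ * v^L := by
      have h0 : ((1:ℝ)/s)^2 = x⁻¹ := by rw [div_pow, one_pow, hs2, one_div]
      rw [h0, mul_pow, inv_pow]
    calc clow * x ^ α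
        = (s ^ (γ * (Pn:ℝ)))⁻¹ * Real.exp (-(2*(L:ℝ)*R^2)) * (((1/s)^2 * v)^L) := by
          rw [hvol_eq, ← hexp, hclowdef]; ring
      _ = (s ^ (γ * (Pn:ℝ)))⁻¹ * Real.exp (-(2*(L:ℝ)*R^2)) * (volume TN).toReal := by
          rw [hTN_vol]
      _ ≤ ∫ z in TN, ‖vandermonde L z‖ ^ γ * Real.exp (-x * ∑ j, f (z j)) :=
          hconst_le
      _ ≤ ∫ z in KL, ‖vandermonde L z‖ ^ γ * Real.exp (-x * ∑ j, f (z j)) :=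
          hTN_KL
  · -- UPPER BOUND
    have hIN : IntegrableOn (fun z : Fin L → ℂ =>
        ‖vandermonde L z‖ ^ γ * Real.exp (-x * ∑ j, f (z j))) KL := hIntN N
    have hsplit := integral_inter_add_diff (μ := volume) hT'm hIN
    set G : (Fin L → ℂ) → ℝ := fun z => (s ^ (γ * (Pn:ℝ)))⁻¹ * VLB.FF L γ (s • (z - cm))
      with hGdef
    have hGint : Integrable G := by
      have h1 : Integrable (fun w : Fin L → ℂ => VLB.FF L γ (s • w)) :=
        (integrable_comp_smul_iff volume (VLB.FF L γ) hs0.ne').2 (VLB.FF_integrable L hγ0)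
      exact (h1.comp_sub_right cm).const_mul _
    have hG_nonneg : ∀ z, 0 ≤ G z := fun z => mul_nonneg (by positivity) (VLB.FF_nonneg L γ _)
    have hFFval : ∀ z : Fin L → ℂ, VLB.FF L γ (s • (z - cm))
        = s ^ (γ * (Pn:ℝ)) * ((∏ p ∈ pr, (‖z p.1 - zstar‖ + ‖z p.2 - zstar‖) ^ γ)
            * Real.exp (-(x/2) * ∑ j, ‖z j - zstar‖ ^ 2)) := by
      intro z
      have hnorm : ∀ j : Fin L, ‖(s • (z - cm)) j‖ = s * ‖z j - zstar‖ := by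
        intro j
        simp only [Pi.smul_apply, Pi.sub_apply, hcmdef]
        rw [norm_smul, Real.norm_of_nonneg hs0.le]
      unfold VLB.FF
      have hprod : ∏ p ∈ pr, (‖(s • (z - cm)) p.1‖ + ‖(s • (z - cm)) p.2‖) ^ γ
          = (s ^ (γ * (Pn:ℝ))) * ∏ p ∈ pr, (‖z p.1 - zstar‖ + ‖z p.2 - zstar‖) ^ γ := by
        have h1 : ∀ p ∈ pr, (‖(s • (z - cm)) p.1‖ + ‖(s • (z - cm)) p.2‖) ^ γ
            = s ^ γ * (‖z p.1 - zstar‖ + ‖z p.2 - zstar‖) ^ γ := by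
          intro p _
          rw [hnorm, hnorm, ← mul_add, Real.mul_rpow hs0.le (by positivity)]
        rw [Finset.prod_congr rfl h1, Finset.prod_mul_distrib, Finset.prod_const, ← hPndef,
          ← Real.rpow_natCast (s ^ γ) Pn, ← Real.rpow_mul hs0.le]
      have hsum : ∑ j, ‖(s • (z - cm)) j‖ ^ 2 = x * ∑ j, ‖z j - zstar‖ ^ 2 := by
        rw [Finset.mul_sum]
        refine Finset.sum_congr rfl (fun j _ => ?_)
        rw [hnorm, mul_pow, hs2]
      rw [← hprdef, hprod, hsum]
      have h9 : -(1/2 : ℝ) * (x * ∑ j, ‖z j - zstar‖ ^ 2)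
          = -(x/2) * ∑ j, ‖z j - zstar‖ ^ 2 := by ring
      rw [h9]
      ring
    have hnear_pt : ∀ z ∈ KL ∩ T',
        ‖vandermonde L z‖ ^ γ * Real.exp (-x * ∑ j, f (z j)) ≤ G z := by
      intro z hz
      obtain ⟨hzK, hzT⟩ := hz
      have hzδ' : ∀ j, ‖z j - zstar‖ ≤ δ := by
        intro j
        have := hzT j (Set.mem_univ j)
        rwa [Metric.mem_closedBall, dist_eq_norm] at this
      have h1 : ‖vandermonde L z‖ ^ γ
          ≤ ∏ p ∈ pr, (‖z p.1 - zstar‖ + ‖z p.2 - zstar‖) ^ γ := by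
        rw [hvand_prod z]
        apply Finset.prod_le_prod (fun p _ => by positivity)
        intro p _
        apply Real.rpow_le_rpow (norm_nonneg _) ?_ hγ0
        have h8 : z p.2 - z p.1 = (z p.2 - zstar) - (z p.1 - zstar) := by ring
        rw [h8]
        calc ‖(z p.2 - zstar) - (z p.1 - zstar)‖
            ≤ ‖z p.2 - zstar‖ + ‖z p.1 - zstar‖ := norm_sub_le _ _
          _ = ‖z p.1 - zstar‖ + ‖z p.2 - zstar‖ := add_comm _ _
      have h2 : Real.exp (-x * ∑ j, f (z j))
          ≤ Real.exp (-(x/2) * ∑ j, ‖z j - zstar‖ ^ 2) := by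
        apply Real.exp_le_exp.2
        have h3 : ∑ j, ‖z j - zstar‖ ^ 2 / 2 ≤ ∑ j, f (z j) :=
          Finset.sum_le_sum (fun j _ => hflb (z j) (hzδ' j))
        have h4 : ∑ j, ‖z j - zstar‖ ^ 2 / 2 = (∑ j, ‖z j - zstar‖ ^ 2) / 2 :=
          (Finset.sum_div _ _ _).symm
        rw [h4] at h3
        have h5 := mul_le_mul_of_nonneg_left h3 hx0.le
        have h6 : x * ((∑ j, ‖z j - zstar‖ ^ 2) / 2) = x/2 * ∑ j, ‖z j - zstar‖ ^ 2 := by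
          ring
        rw [h6] at h5
        linarith
      calc ‖vandermonde L z‖ ^ γ * Real.exp (-x * ∑ j, f (z j))
          ≤ (∏ p ∈ pr, (‖z p.1 - zstar‖ + ‖z p.2 - zstar‖) ^ γ)
              * Real.exp (-(x/2) * ∑ j, ‖z j - zstar‖ ^ 2) :=
            mul_le_mul h1 h2 (Real.exp_nonneg _) (by positivity)
        _ = G z := by
            rw [hGdef]
            dsimp only
            rw [hFFval z, ← mul_assoc, inv_mul_cancel₀ hsP0.ne', one_mul]
    have hnear : (∫ z in KL ∩ T',
        ‖vandermonde L z‖ ^ γ * Real.exp (-x * ∑ j, f (z j))) ≤ x ^ α * J := by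
      calc (∫ z in KL ∩ T', ‖vandermonde L z‖ ^ γ * Real.exp (-x * ∑ j, f (z j)))
          ≤ ∫ z in KL ∩ T', G z :=
            setIntegral_mono_on (hIN.mono_set Set.inter_subset_left) hGint.integrableOn
              (hKLm.inter hT'm) hnear_pt
        _ ≤ ∫ z, G z := setIntegral_le_integral hGint (ae_of_all _ hG_nonneg)
        _ = (s ^ (γ * (Pn:ℝ)))⁻¹ * ((s ^ (2*L))⁻¹ * J) := by
            rw [hGdef]
            rw [MeasureTheory.integral_const_mul]
            rw [VLB.integral_scale_translate (VLB.FF L γ) s hs0 cm]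
        _ = x ^ α * J := by rw [hs2L, ← mul_assoc, hexp]
    have hfar_pt : ∀ z ∈ KL \ T',
        ‖vandermonde L z‖ ^ γ * Real.exp (-x * ∑ j, f (z j))
          ≤ Dγ * Real.exp (-(ε * x)) := by
      intro z hz
      obtain ⟨hzK, hzT⟩ := hz
      have hzK' : ∀ j, z j ∈ K := fun j => hzK j (Set.mem_univ j)
      obtain ⟨j₀, hj₀⟩ : ∃ j, ¬(‖z j - zstar‖ ≤ δ) := by
        by_contra hcon
        push_neg at hcon
        apply hzT
        intro j _
        rw [Metric.mem_closedBall, dist_eq_norm]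
        exact hcon j
      have h1 : ‖vandermonde L z‖ ^ γ ≤ Dγ := by
        rw [hvand_prod z, hDγdef]
        calc ∏ p ∈ pr, ‖z p.2 - z p.1‖ ^ γ
            ≤ ∏ _p ∈ pr, (2*ρ+1) ^ γ := by
              apply Finset.prod_le_prod (fun p _ => by positivity)
              intro p _
              apply Real.rpow_le_rpow (norm_nonneg _) ?_ hγ0
              calc ‖z p.2 - z p.1‖ ≤ ‖z p.2‖ + ‖z p.1‖ := norm_sub_le _ _
                _ ≤ ρ + ρ := add_le_add (hρK _ (hzK' p.2)) (hρK _ (hzK' p.1))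
                _ ≤ 2*ρ+1 := by linarith
          _ = ((2*ρ+1) ^ γ) ^ Pn := by rw [Finset.prod_const, hPndef]
      have h2 : Real.exp (-x * ∑ j, f (z j)) ≤ Real.exp (-(ε * x)) := by
        apply Real.exp_le_exp.2
        have h3 : ε ≤ ∑ j, f (z j) := by
          refine le_trans (hεf (z j₀) (hzK' j₀) hj₀) ?_
          exact Finset.single_le_sum (fun j _ => hf_nonneg (z j)) (Finset.mem_univ j₀)
        have h5 := mul_le_mul_of_nonneg_left h3 hx0.le
        have h6 : x * ε = ε * x := mul_comm _ _
        linarith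
      exact mul_le_mul h1 h2 (Real.exp_nonneg _) hDγ0
    have hfar : (∫ z in KL \ T',
        ‖vandermonde L z‖ ^ γ * Real.exp (-x * ∑ j, f (z j)))
          ≤ Dγ * Vfin * (x ^ α) := by
      have hμ : volume (KL \ T') < ⊤ := lt_of_le_of_lt (measure_mono Set.diff_subset) hKLfin
      calc (∫ z in KL \ T', ‖vandermonde L z‖ ^ γ * Real.exp (-x * ∑ j, f (z j)))
          ≤ ∫ _z in KL \ T', (Dγ * Real.exp (-(ε * x))) :=
            setIntegral_mono_on (hIN.mono_set Set.diff_subset)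
              (integrableOn_const hμ.ne) (hKLm.diff hT'm) hfar_pt
        _ = (volume (KL \ T')).toReal * (Dγ * Real.exp (-(ε * x))) := by
            rw [setIntegral_const, smul_eq_mul]; rfl
        _ ≤ Vfin * (Dγ * Real.exp (-(ε * x))) := by
            apply mul_le_mul_of_nonneg_right ?_ (by positivity)
            rw [hVfindef]
            exact ENNReal.toReal_mono hKLfin.ne (measure_mono Set.diff_subset)
        _ ≤ Vfin * (Dγ * (x ^ α)) := by
            apply mul_le_mul_of_nonneg_left ?_ hVfin0
            exact mul_le_mul_of_nonneg_left hexp_le hDγ0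
        _ = Dγ * Vfin * (x ^ α) := by ring
    rw [← hsplit]
    calc (∫ z in KL ∩ T', ‖vandermonde L z‖ ^ γ * Real.exp (-x * ∑ j, f (z j)))
          + (∫ z in KL \ T', ‖vandermonde L z‖ ^ γ * Real.exp (-x * ∑ j, f (z j)))
        ≤ x ^ α * J + Dγ * Vfin * (x ^ α) := add_le_add hnear hfar
      _ = Cup * x ^ α := by rw [hCupdef]; ring
      _ ≤ (clow + Cup + 1) * x ^ α :=
          mul_le_mul_of_nonneg_right (by linarith) hxα.le
end
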